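/- arXiv:math/0702481 — 9 statements merged into one kernel-verified Lean document; each statement's English description precedes it below -/
import Mathlib

section
/- Suppose g(r) ≥ ε for all r ≥ r₀, where r₀ ≥ 1 and ε > 0. Then for r ≥ r₀ the quantity λ(r) := ∫_r^∞ μ(ρ)^{1−d} e^{βG(ρ)} ( ∫_ρ^∞ e^{−βG(s)} μ(s)^{d−1} (1+η(s)²)^{−1} s^{−2} ds ) dρ is finite, λ is nonincreasing on [r₀,∞), and λ(r) = O(1/r) as r → ∞; in particular λ(r) → 0 as r → ∞. -/
/-!
Write `W = e^{-βG} μ^{d-1}`, so that `λ(r) = ∫_r^∞ W(ρ)⁻¹ ∫_ρ^∞ W(s) (1 + η(s)²)⁻¹ s⁻² ds dρ`.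
For `r₀ ≤ ρ ≤ s` the growth `G(s) - G(ρ) ≥ ε (s - ρ)` and the ratio bound
`μ(s) ≤ (s/ρ) μ(ρ) ≤ (1 + s - ρ) μ(ρ)` give `W(s) ≤ D W(ρ) e^{-c (s - ρ)}` with `c = βε/2`:
half of the exponential decay absorbs the polynomial factor `(1 + s - ρ)^{d-1}`.
Hence the inner integral is at most `(D/c) W(ρ) ρ⁻²`, the outer integrand at most `(D/c) ρ⁻²`,
and `0 ≤ λ(r) ≤ (D/c) / r`. Monotonicity holds because `λ` integrates a nonnegative function
over shrinking half-lines.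
-/

open Filter MeasureTheory Set Asymptotics Topology Real

lemma continuousOn_primitive_Ici {φ : ℝ → ℝ} {a : ℝ} (hφ : ContinuousOn φ (Ici a)) :
    ContinuousOn (fun x => ∫ t in a..x, φ t) (Ici a) := by
  intro x hx
  have hax : a ≤ x + 1 := by linarith [hx.out]
  have hsub : uIcc a (x + 1) ⊆ Ici a := by
    rw [uIcc_of_le hax]
    exact Icc_subset_Ici_self
  have hnhds : uIcc a (x + 1) ∈ 𝓝[Ici a] x := by
    rw [uIcc_of_le hax, ← Ici_inter_Iic]
    exact inter_mem_nhdsWithin _ (Iic_mem_nhds (lt_add_one x))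
  exact (intervalIntegral.continuousOn_primitive_interval
    ((hφ.mono hsub).integrableOn_compact isCompact_uIcc) x
    (mem_of_mem_nhdsWithin hx hnhds)).mono_of_mem_nhdsWithin hnhds

lemma exists_one_add_pow_le_mul_exp (n : ℕ) {c : ℝ} (hc : 0 < c) :
    ∃ D, ∀ u, 0 ≤ u → (1 + u) ^ n ≤ D * exp (c * u) := by
  refine ⟨n.factorial / c ^ n * exp c, fun u hu => ?_⟩
  have h := pow_div_factorial_le_exp (x := c * (1 + u)) (by positivity) n
  rw [div_le_iff₀ (by positivity), mul_pow] at h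
  calc (1 + u) ^ n = c ^ n * (1 + u) ^ n / c ^ n := by field_simp
    _ ≤ exp (c * (1 + u)) * n.factorial / c ^ n := by gcongr
    _ = n.factorial / c ^ n * exp c * exp (c * u) := by
      rw [show c * (1 + u) = c + c * u by ring, exp_add]
      ring

lemma exp_neg_mul_sub (c ρ s : ℝ) : exp (-(c * (s - ρ))) = exp (c * ρ) * exp (-c * s) := by
  rw [← exp_add]
  ring_nf

lemma integrableOn_Ioi_exp_neg_mul_sub {c : ℝ} (hc : 0 < c) (ρ : ℝ) :
    IntegrableOn (fun s => exp (-(c * (s - ρ)))) (Ioi ρ) := by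
  simp_rw [exp_neg_mul_sub]
  exact (exp_neg_integrableOn_Ioi ρ hc).const_mul (exp (c * ρ))

lemma integral_Ioi_exp_neg_mul_sub {c : ℝ} (hc : 0 < c) (ρ : ℝ) :
    ∫ s in Ioi ρ, exp (-(c * (s - ρ))) = c⁻¹ := by
  simp_rw [exp_neg_mul_sub]
  rw [integral_const_mul, integral_exp_mul_Ioi (neg_lt_zero.2 hc), neg_div_neg_eq, mul_div_assoc',
    ← exp_add]
  simp

lemma inv_sq_eqOn_rpow_neg_two : EqOn (fun x : ℝ => (x ^ 2)⁻¹) (fun x => x ^ (-2 : ℝ)) (Ioi 0) :=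
  fun x hx => by simp [rpow_neg (le_of_lt hx)]

lemma integrableOn_Ioi_inv_sq {a : ℝ} (ha : 0 < a) :
    IntegrableOn (fun x : ℝ => (x ^ 2)⁻¹) (Ioi a) :=
  (integrableOn_Ioi_rpow_of_lt (by norm_num) ha).congr_fun
    (inv_sq_eqOn_rpow_neg_two.symm.mono (Ioi_subset_Ioi ha.le)) measurableSet_Ioi

lemma integral_Ioi_inv_sq {a : ℝ} (ha : 0 < a) : ∫ x in Ioi a, (x ^ 2)⁻¹ = a⁻¹ := by
  rw [setIntegral_congr_fun measurableSet_Ioi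
      (inv_sq_eqOn_rpow_neg_two.mono (Ioi_subset_Ioi ha.le)),
    integral_Ioi_rpow_of_lt (by norm_num) ha]
  norm_num [rpow_neg_one]

noncomputable def innerTail (W q : ℝ → ℝ) (ρ : ℝ) : ℝ :=
  ∫ s in Ioi ρ, W s * q s * (s ^ 2)⁻¹

noncomputable def outerTail (W q : ℝ → ℝ) (r : ℝ) : ℝ :=
  ∫ ρ in Ioi r, (W ρ)⁻¹ * innerTail W q ρ

structure TailAssumptions (W q : ℝ → ℝ) (r₀ c D : ℝ) : Prop where
  r₀_pos : 0 < r₀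
  c_pos : 0 < c
  continuousOn_weight : ContinuousOn W (Ioi r₀)
  continuousOn_factor : ContinuousOn q (Ioi r₀)
  weight_pos : ∀ s, 0 < W s
  factor_mem : ∀ s, q s ∈ Icc 0 1
  decay : ∀ ρ s, r₀ ≤ ρ → ρ ≤ s → W s ≤ D * W ρ * exp (-(c * (s - ρ)))

namespace TailAssumptions

variable {W q : ℝ → ℝ} {r₀ c D : ℝ}

lemma integrand_nonneg (h : TailAssumptions W q r₀ c D) (s : ℝ) : 0 ≤ W s * q s * (s ^ 2)⁻¹ := by
  have := h.weight_pos s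
  have := (h.factor_mem s).1
  positivity

lemma integrand_le (h : TailAssumptions W q r₀ c D) {ρ s : ℝ} (hρ : r₀ ≤ ρ) (hs : ρ ≤ s) :
    W s * q s * (s ^ 2)⁻¹ ≤ D * W ρ * (ρ ^ 2)⁻¹ * exp (-(c * (s - ρ))) := by
  have hρ0 : 0 < ρ := h.r₀_pos.trans_le hρ
  have := h.weight_pos s
  calc W s * q s * (s ^ 2)⁻¹ ≤ W s * 1 * (ρ ^ 2)⁻¹ := by gcongr; exact (h.factor_mem s).2
    _ ≤ D * W ρ * exp (-(c * (s - ρ))) * (ρ ^ 2)⁻¹ := by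
      rw [mul_one]
      gcongr
      exact h.decay ρ s hρ hs
    _ = D * W ρ * (ρ ^ 2)⁻¹ * exp (-(c * (s - ρ))) := by ring

lemma integrableOn_integrand (h : TailAssumptions W q r₀ c D) {ρ : ℝ} (hρ : r₀ ≤ ρ) :
    IntegrableOn (fun s => W s * q s * (s ^ 2)⁻¹) (Ioi ρ) := by
  have hcont : ContinuousOn (fun s => W s * q s * (s ^ 2)⁻¹) (Ioi ρ) :=
    ((h.continuousOn_weight.mul h.continuousOn_factor).mono (Ioi_subset_Ioi hρ)).mul
      ((continuousOn_id.pow 2).inv₀ fun s hs =>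
        (pow_pos (h.r₀_pos.trans_le (hρ.trans hs.out.le)) 2).ne')
  refine Integrable.mono'
    ((integrableOn_Ioi_exp_neg_mul_sub h.c_pos ρ).const_mul (D * W ρ * (ρ ^ 2)⁻¹))
    (hcont.aestronglyMeasurable measurableSet_Ioi)
    ((ae_restrict_iff' measurableSet_Ioi).2 (ae_of_all _ fun s hs => ?_))
  rw [Real.norm_of_nonneg (h.integrand_nonneg s)]
  exact h.integrand_le hρ hs.out.le

lemma innerTail_nonneg (h : TailAssumptions W q r₀ c D) (ρ : ℝ) : 0 ≤ innerTail W q ρ :=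
  setIntegral_nonneg measurableSet_Ioi fun s _ => h.integrand_nonneg s

lemma innerTail_le (h : TailAssumptions W q r₀ c D) {ρ : ℝ} (hρ : r₀ ≤ ρ) :
    innerTail W q ρ ≤ D / c * W ρ * (ρ ^ 2)⁻¹ :=
  calc innerTail W q ρ ≤ ∫ s in Ioi ρ, D * W ρ * (ρ ^ 2)⁻¹ * exp (-(c * (s - ρ))) :=
        setIntegral_mono_on (h.integrableOn_integrand hρ)
          ((integrableOn_Ioi_exp_neg_mul_sub h.c_pos ρ).const_mul _) measurableSet_Ioi
          fun s hs => h.integrand_le hρ hs.out.le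
    _ = D / c * W ρ * (ρ ^ 2)⁻¹ := by
      rw [integral_const_mul, integral_Ioi_exp_neg_mul_sub h.c_pos]
      ring

lemma antitoneOn_innerTail (h : TailAssumptions W q r₀ c D) : AntitoneOn (innerTail W q) (Ici r₀) :=
  fun _ hu _ _ huv => setIntegral_mono_set (h.integrableOn_integrand hu)
    (ae_of_all _ h.integrand_nonneg) (Ioi_subset_Ioi huv).eventuallyLE

lemma outerIntegrand_nonneg (h : TailAssumptions W q r₀ c D) (ρ : ℝ) :
    0 ≤ (W ρ)⁻¹ * innerTail W q ρ :=
  mul_nonneg (inv_nonneg.2 (h.weight_pos ρ).le) (h.innerTail_nonneg ρ)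

lemma outerIntegrand_le (h : TailAssumptions W q r₀ c D) {ρ : ℝ} (hρ : r₀ ≤ ρ) :
    (W ρ)⁻¹ * innerTail W q ρ ≤ D / c * (ρ ^ 2)⁻¹ := by
  have hW := h.weight_pos ρ
  calc (W ρ)⁻¹ * innerTail W q ρ ≤ (W ρ)⁻¹ * (D / c * W ρ * (ρ ^ 2)⁻¹) := by
        gcongr
        exact h.innerTail_le hρ
    _ = D / c * (ρ ^ 2)⁻¹ := by field_simp

lemma integrableOn_outerIntegrand (h : TailAssumptions W q r₀ c D) {r : ℝ} (hr : r₀ ≤ r) :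
    IntegrableOn (fun ρ => (W ρ)⁻¹ * innerTail W q ρ) (Ioi r) := by
  have hr0 : 0 < r := h.r₀_pos.trans_le hr
  have hsub : Ioi r ⊆ Ici r₀ := fun ρ hρ => hr.trans hρ.out.le
  have hmeas :
      AEStronglyMeasurable (fun ρ => (W ρ)⁻¹ * innerTail W q ρ) (volume.restrict (Ioi r)) :=
    (((h.continuousOn_weight.mono (Ioi_subset_Ioi hr)).inv₀ fun ρ _ => (h.weight_pos ρ).ne')
      |>.aestronglyMeasurable measurableSet_Ioi).mul
      (aemeasurable_restrict_of_antitoneOn measurableSet_Ioi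
        (h.antitoneOn_innerTail.mono hsub)).aestronglyMeasurable
  refine Integrable.mono' ((integrableOn_Ioi_inv_sq hr0).const_mul (D / c)) hmeas
    ((ae_restrict_iff' measurableSet_Ioi).2 (ae_of_all _ fun ρ hρ => ?_))
  rw [Real.norm_of_nonneg (h.outerIntegrand_nonneg ρ)]
  exact h.outerIntegrand_le (hsub hρ)

lemma outerTail_nonneg (h : TailAssumptions W q r₀ c D) (r : ℝ) : 0 ≤ outerTail W q r :=
  setIntegral_nonneg measurableSet_Ioi fun ρ _ => h.outerIntegrand_nonneg ρ

lemma outerTail_le (h : TailAssumptions W q r₀ c D) {r : ℝ} (hr : r₀ ≤ r) :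
    outerTail W q r ≤ D / c * r⁻¹ := by
  have hr0 : 0 < r := h.r₀_pos.trans_le hr
  calc outerTail W q r ≤ ∫ ρ in Ioi r, D / c * (ρ ^ 2)⁻¹ :=
        setIntegral_mono_on (h.integrableOn_outerIntegrand hr)
          ((integrableOn_Ioi_inv_sq hr0).const_mul _) measurableSet_Ioi
          fun ρ hρ => h.outerIntegrand_le (hr.trans hρ.out.le)
    _ = D / c * r⁻¹ := by rw [integral_const_mul, integral_Ioi_inv_sq hr0]

lemma antitoneOn_outerTail (h : TailAssumptions W q r₀ c D) : AntitoneOn (outerTail W q) (Ici r₀) :=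
  fun _ hu _ _ huv => setIntegral_mono_set (h.integrableOn_outerIntegrand hu)
    (ae_of_all _ h.outerIntegrand_nonneg) (Ioi_subset_Ioi huv).eventuallyLE

lemma outerTail_isBigO (h : TailAssumptions W q r₀ c D) :
    outerTail W q =O[atTop] fun r => 1 / r := by
  refine IsBigO.of_bound (D / c) ?_
  filter_upwards [eventually_ge_atTop r₀] with r hr
  have hr0 : 0 < r := h.r₀_pos.trans_le hr
  rw [Real.norm_of_nonneg (h.outerTail_nonneg r), Real.norm_of_nonneg (by positivity), one_div]
  exact h.outerTail_le hr

lemma tendsto_outerTail (h : TailAssumptions W q r₀ c D) : Tendsto (outerTail W q) atTop (𝓝 0) :=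
  h.outerTail_isBigO.trans_tendsto (by simpa only [one_div] using tendsto_inv_atTop_zero)

end TailAssumptions

lemma mul_sub_le_integral_sub_integral {g : ℝ → ℝ} {a ε u v : ℝ} (hg : ContinuousOn g (Ici a))
    (hu : a ≤ u) (huv : u ≤ v) (hε : ∀ t ∈ Icc u v, ε ≤ g t) :
    ε * (v - u) ≤ (∫ t in a..v, g t) - ∫ t in a..u, g t := by
  have hint : ∀ x y, a ≤ x → x ≤ y → IntervalIntegrable g volume x y := fun x y hx hxy =>
    (hg.mono ((Icc_subset_Ici_iff hxy).2 hx)).intervalIntegrable_of_Icc hxy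
  rw [intervalIntegral.integral_interval_sub_left (hint a v le_rfl (hu.trans huv))
    (hint a u le_rfl hu)]
  simpa [mul_comm] using
    intervalIntegral.integral_mono_on huv intervalIntegrable_const (hint u v hu huv) hε

noncomputable def radialWeight (η : ℝ → ℝ) (r : ℝ) : ℝ :=
  exp (∫ s in (1 : ℝ)..r, 1 / (s * (1 + η s ^ 2)))

lemma radialWeight_pos (η : ℝ → ℝ) (r : ℝ) : 0 < radialWeight η r := exp_pos _

lemma continuousOn_one_div_mul_one_add_sq {η : ℝ → ℝ} (hη : ContinuousOn η (Ici 0)) :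
    ContinuousOn (fun s => 1 / (s * (1 + η s ^ 2))) (Ioi 0) :=
  continuousOn_const.div
    (continuousOn_id.mul (continuousOn_const.add ((hη.mono Ioi_subset_Ici_self).pow 2)))
    fun s (hs : 0 < s) => by positivity

lemma continuousOn_radialWeight {η : ℝ → ℝ} (hη : ContinuousOn η (Ici 0)) :
    ContinuousOn (radialWeight η) (Ici 1) :=
  (continuousOn_primitive_Ici ((continuousOn_one_div_mul_one_add_sq hη).mono
    fun _ hs => mem_Ioi.2 (zero_lt_one.trans_le hs))).rexp

lemma radialWeight_le_div_mul {η : ℝ → ℝ} (hη : ContinuousOn η (Ici 0)) {u v : ℝ} (hu : 0 < u)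
    (huv : u ≤ v) : radialWeight η v ≤ v / u * radialWeight η u := by
  have hv : 0 < v := hu.trans_le huv
  have hint : ∀ x y, 0 < x → 0 < y →
      IntervalIntegrable (fun s => 1 / (s * (1 + η s ^ 2))) volume x y :=
    fun x y hx hy => ((continuousOn_one_div_mul_one_add_sq hη).mono
      (ordConnected_Ioi.uIcc_subset hx hy)).intervalIntegrable
  have hle : ∫ s in u..v, 1 / (s * (1 + η s ^ 2)) ≤ log (v / u) := by
    rw [← integral_inv_of_pos hu hv]
    refine intervalIntegral.integral_mono_on huv (hint u v hu hv)
      (intervalIntegral.intervalIntegrable_inv (fun s hs => ?_) continuousOn_id) fun s hs => ?_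
    · exact (lt_of_lt_of_le (lt_min hu hv) hs.1).ne'
    · have hs0 : 0 < s := hu.trans_le hs.1
      rw [one_div]
      exact inv_anti₀ hs0 (le_mul_of_one_le_right hs0.le (le_add_of_nonneg_right (sq_nonneg _)))
  calc radialWeight η v
      = radialWeight η u * exp (∫ s in u..v, 1 / (s * (1 + η s ^ 2))) := by
        rw [radialWeight, radialWeight, ← exp_add,
          intervalIntegral.integral_add_adjacent_intervals (hint 1 u one_pos hu) (hint u v hu hv)]
    _ ≤ radialWeight η u * (v / u) := by
      gcongr
      · exact (radialWeight_pos η u).le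
      · exact (exp_le_exp.2 hle).trans (exp_log (div_pos hv hu)).le
    _ = v / u * radialWeight η u := mul_comm _ _

lemma exists_exp_neg_mul_mul_pow_le {G μ : ℝ → ℝ} {β ε r₀ : ℝ} (n : ℕ) (hβ : 0 < β) (hε : 0 < ε)
    (hr₀ : 1 ≤ r₀) (hμ : ∀ r, 0 < μ r)
    (hG : ∀ u v, r₀ ≤ u → u ≤ v → ε * (v - u) ≤ G v - G u)
    (hμle : ∀ u v, r₀ ≤ u → u ≤ v → μ v ≤ v / u * μ u) :
    ∃ D, ∀ ρ s, r₀ ≤ ρ → ρ ≤ s → exp (-(β * G s)) * μ s ^ n ≤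
      D * (exp (-(β * G ρ)) * μ ρ ^ n) * exp (-(β * ε / 2 * (s - ρ))) := by
  obtain ⟨D, hD⟩ := exists_one_add_pow_le_mul_exp n (by positivity : 0 < β * ε / 2)
  refine ⟨D, fun ρ s hρ hs => ?_⟩
  have hρ0 : 0 < ρ := by linarith
  have hexp : exp (-(β * G s)) ≤ exp (-(β * G ρ)) * exp (-(β * ε * (s - ρ))) := by
    rw [← exp_add, exp_le_exp]
    nlinarith [hG ρ s hρ hs]
  have hμs : μ s ≤ (1 + (s - ρ)) * μ ρ := by
    refine (hμle ρ s hρ hs).trans ?_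
    gcongr
    · exact (hμ ρ).le
    · rw [div_le_iff₀ hρ0]
      nlinarith
  have hpow : μ s ^ n ≤ D * exp (β * ε / 2 * (s - ρ)) * μ ρ ^ n :=
    calc μ s ^ n ≤ ((1 + (s - ρ)) * μ ρ) ^ n := pow_le_pow_left₀ (hμ s).le hμs n
      _ = (1 + (s - ρ)) ^ n * μ ρ ^ n := mul_pow _ _ _
      _ ≤ D * exp (β * ε / 2 * (s - ρ)) * μ ρ ^ n := by
        have := hμ ρ
        gcongr
        exact hD _ (by linarith)
  have hhalf :
      exp (-(β * ε * (s - ρ))) * exp (β * ε / 2 * (s - ρ)) = exp (-(β * ε / 2 * (s - ρ))) := by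
    rw [← exp_add]
    ring_nf
  calc exp (-(β * G s)) * μ s ^ n
      ≤ exp (-(β * G ρ)) * exp (-(β * ε * (s - ρ))) * (D * exp (β * ε / 2 * (s - ρ)) * μ ρ ^ n) :=
        mul_le_mul hexp hpow (pow_nonneg (hμ s).le n) (by positivity)
    _ = D * (exp (-(β * G ρ)) * μ ρ ^ n) * exp (-(β * ε / 2 * (s - ρ))) := by
      linear_combination (exp (-(β * G ρ)) * D * μ ρ ^ n) * hhalf

lemma exists_tailAssumptions {η G : ℝ → ℝ} {β ε r₀ : ℝ} (n : ℕ) (hβ : 0 < β) (hε : 0 < ε)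
    (hr₀ : 1 ≤ r₀) (hη : ContinuousOn η (Ici 0)) (hGc : ContinuousOn G (Ioi r₀))
    (hG : ∀ u v, r₀ ≤ u → u ≤ v → ε * (v - u) ≤ G v - G u) :
    ∃ D, TailAssumptions (fun s => exp (-(β * G s)) * radialWeight η s ^ n)
      (fun s => (1 + η s ^ 2)⁻¹) r₀ (β * ε / 2) D := by
  obtain ⟨D, hD⟩ := exists_exp_neg_mul_mul_pow_le n hβ hε hr₀ (radialWeight_pos η) hG
    fun u v hu huv => radialWeight_le_div_mul hη (by linarith) huv
  have hsub : Ioi r₀ ⊆ Ici 1 := fun s hs => hr₀.trans hs.out.le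
  refine ⟨D, ⟨by linarith, half_pos (mul_pos hβ hε), ?_, ?_, fun s => ?_, fun s => ⟨?_, ?_⟩, hD⟩⟩
  · exact (hGc.const_smul β).neg.rexp.mul (((continuousOn_radialWeight hη).mono hsub).pow n)
  · exact (continuousOn_const.add
      ((hη.mono (hsub.trans (Ici_subset_Ici.2 zero_le_one))).pow 2)).inv₀
      fun s _ => (by positivity : 0 < 1 + η s ^ 2).ne'
  · have := radialWeight_pos η s
    positivity
  · positivity
  · exact inv_le_one_of_one_le₀ (le_add_of_nonneg_right (sq_nonneg _))

theorem stmt3_general (d : ℕ) (β ε : ℝ) (hβ : 0 < β) (hε : 0 < ε)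
    (b σ η : ℝ → ℝ)
    (hbc : ContinuousOn b (Ici 0))
    (hσc : ContinuousOn σ (Ici 0)) (hηc : ContinuousOn η (Ici 0))
    (hσε : ∀ r ∈ Ici (0:ℝ), ε ≤ σ r)
    (g G μ : ℝ → ℝ)
    (hg : ∀ r, g r = 2 * r * b r / (σ r) ^ 2)
    (hG : ∀ r, G r = ∫ ρ in (0:ℝ)..r, g ρ)
    (hμ : ∀ r, μ r = Real.exp (∫ s in (1:ℝ)..r, 1 / (s * (1 + η s ^ 2))))
    (r₀ : ℝ) (hr₀ : 1 ≤ r₀) (hgr₀ : ∀ r ≥ r₀, ε ≤ g r)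
    (lam : ℝ → ℝ)
    (hlam : ∀ r, lam r = ∫ ρ in Ioi r, (μ ρ ^ (d - 1))⁻¹ * Real.exp (β * G ρ) *
        ∫ s in Ioi ρ, Real.exp (-(β * G s)) * μ s ^ (d - 1) * (1 + η s ^ 2)⁻¹ * (s ^ 2)⁻¹) :
    (∀ ρ ≥ r₀, IntegrableOn
        (fun s => Real.exp (-(β * G s)) * μ s ^ (d - 1) * (1 + η s ^ 2)⁻¹ * (s ^ 2)⁻¹)
        (Ioi ρ)) ∧
    (∀ r ≥ r₀, IntegrableOn
        (fun ρ => (μ ρ ^ (d - 1))⁻¹ * Real.exp (β * G ρ) *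
          ∫ s in Ioi ρ, Real.exp (-(β * G s)) * μ s ^ (d - 1) * (1 + η s ^ 2)⁻¹ * (s ^ 2)⁻¹)
        (Ioi r)) ∧
    AntitoneOn lam (Ici r₀) ∧
    (lam =O[atTop] fun r => 1 / r) ∧
    Tendsto lam atTop (nhds 0) := by
  obtain rfl : μ = radialWeight η := funext hμ
  have hgc : ContinuousOn g (Ici 0) :=
    (((continuousOn_const.mul continuousOn_id).mul hbc).div (hσc.pow 2)
      fun r hr => (pow_pos (hε.trans_le (hσε r hr)) 2).ne').congr fun r _ => hg r
  have hGc : ContinuousOn G (Ici 0) := (continuousOn_primitive_Ici hgc).congr fun r _ => hG r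
  have hGgrowth : ∀ u v, r₀ ≤ u → u ≤ v → ε * (v - u) ≤ G v - G u := fun u v hu huv => by
    rw [hG, hG]
    exact mul_sub_le_integral_sub_integral hgc (by linarith) huv fun t ht => hgr₀ t (hu.trans ht.1)
  obtain ⟨D, hT⟩ := exists_tailAssumptions (d - 1) hβ hε hr₀ hηc
    (hGc.mono fun r hr => (zero_le_one.trans hr₀).trans hr.out.le) hGgrowth
  have hweight : ∀ ρ, (radialWeight η ρ ^ (d - 1))⁻¹ * exp (β * G ρ) =
      (exp (-(β * G ρ)) * radialWeight η ρ ^ (d - 1))⁻¹ := fun ρ => by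
    rw [mul_inv, exp_neg, inv_inv, mul_comm]
  obtain rfl : lam = outerTail _ _ := funext fun r => by
    rw [hlam, outerTail]
    simp_rw [hweight]
    rfl
  simp_rw [hweight]
  exact ⟨fun ρ hρ => hT.integrableOn_integrand hρ, fun r hr => hT.integrableOn_outerIntegrand hr,
    hT.antitoneOn_outerTail, hT.outerTail_isBigO, hT.tendsto_outerTail⟩

/-- If g ≥ ε on [r₀,∞), the quantity
λ(r) = ∫_r^∞ μ(ρ)^{1-d} e^{βG(ρ)} ( ∫_ρ^∞ e^{-βG(s)} μ(s)^{d-1} (1+η(s)²)⁻¹ s⁻² ds ) dρ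
is finite for r ≥ r₀, nonincreasing on [r₀,∞), O(1/r) at ∞, and tends to 0 at ∞. -/
theorem stmt3 (d : ℕ) (hd : 1 ≤ d) (β ε : ℝ) (hβ : 0 < β) (hε : 0 < ε)
    (f b σ η : ℝ → ℝ)
    (hfc : ContinuousOn f (Ici 0)) (hbc : ContinuousOn b (Ici 0))
    (hσc : ContinuousOn σ (Ici 0)) (hηc : ContinuousOn η (Ici 0))
    (hσε : ∀ r ∈ Ici (0:ℝ), ε ≤ σ r)
    (g G μ : ℝ → ℝ)
    (hg : ∀ r, g r = 2 * r * b r / (σ r) ^ 2)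
    (hG : ∀ r, G r = ∫ ρ in (0:ℝ)..r, g ρ)
    (hμ : ∀ r, μ r = Real.exp (∫ s in (1:ℝ)..r, 1 / (s * (1 + η s ^ 2))))
    (r₀ : ℝ) (hr₀ : 1 ≤ r₀) (hgr₀ : ∀ r ≥ r₀, ε ≤ g r)
    (lam : ℝ → ℝ)
    (hlam : ∀ r, lam r = ∫ ρ in Ioi r, (μ ρ ^ (d - 1))⁻¹ * Real.exp (β * G ρ) *
        ∫ s in Ioi ρ, Real.exp (-(β * G s)) * μ s ^ (d - 1) * (1 + η s ^ 2)⁻¹ * (s ^ 2)⁻¹) :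
    (∀ ρ ≥ r₀, IntegrableOn
        (fun s => Real.exp (-(β * G s)) * μ s ^ (d - 1) * (1 + η s ^ 2)⁻¹ * (s ^ 2)⁻¹)
        (Ioi ρ)) ∧
    (∀ r ≥ r₀, IntegrableOn
        (fun ρ => (μ ρ ^ (d - 1))⁻¹ * Real.exp (β * G ρ) *
          ∫ s in Ioi ρ, Real.exp (-(β * G s)) * μ s ^ (d - 1) * (1 + η s ^ 2)⁻¹ * (s ^ 2)⁻¹)
        (Ioi r)) ∧
    AntitoneOn lam (Ici r₀) ∧
    (lam =O[atTop] fun r => 1 / r) ∧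
    Tendsto lam atTop (nhds 0) :=
  stmt3_general d β ε hβ hε b σ η hbc hσc hηc hσε g G μ hg hG hμ r₀ hr₀ hgr₀ lam hlam
end

section
/- Under hypotheses (H), assume furthermore that f = b (so that h = g). Then the identity function ψ(r) = r solves equation (5), and it is the unique C² solution ψ on [0,∞) of equation (5) satisfying ψ(0) = 0 and |ψ(r)| = O(e^{ε″ r}) as r → ∞ for some ε″ < βε/2. -/
/-!
Since `h = g`, the identity solves (5), and for another solution `ψ` the difference `χ = ψ - r`
solves `χ'' = (β g - a) χ' + q χ` with `a ≤ (d - 1) / r` and `q ≥ 0`. Take a strict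
supersolution `W r = ∫_{r₁}^r exp (β G s - θ s) s ^ (1 - d) ds`, i.e. `W'' < (β g - a) W'`. At a
positive interior maximum of `χ - max (χ r₁) 0 - δ W` on `[r₁, ∞)` the equation would force a
positive second derivative, so this function stays `≤ 0`: it is `≤ 0` at `r₁`, and at infinity
because `W` grows like `exp ((β ε - 2 θ) r)`, faster than `χ = O(exp (β ε r / 2))`. Letting
`δ → 0` and then `r₁ → 0` gives `χ ≤ 0`; likewise `-χ ≤ 0`.
-/

open Filter Set Asymptotics Topology Real

theorem IsLocalMax.second_deriv_nonpos {f f' : ℝ → ℝ} {x f'' : ℝ} (hmax : IsLocalMax f x)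
    (hf : ∀ᶠ y in 𝓝 x, HasDerivAt f (f' y) y) (hf' : HasDerivAt f' f'' x) : f'' ≤ 0 := by
  by_contra! hpos
  have hderiv : deriv f =ᶠ[𝓝 x] f' := hf.mono fun y hy => hy.deriv
  have hcrit : deriv f x = 0 := hderiv.self_of_nhds ▸ hmax.hasDerivAt_eq_zero hf.self_of_nhds
  have hmin : IsLocalMin f x := isLocalMin_of_deriv_deriv_pos
    (by rwa [hderiv.deriv_eq, hf'.deriv]) hcrit hf.self_of_nhds.continuousAt
  have hconst : f =ᶠ[𝓝 x] fun _ => f x := (hmin.and hmax).mono fun y hy => le_antisymm hy.2 hy.1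
  have hzero : f' =ᶠ[𝓝 x] fun _ => 0 := hderiv.symm.trans (by simpa using hconst.deriv)
  exact hpos.ne' ((hf'.congr_of_eventuallyEq hzero.symm).unique (hasDerivAt_const x 0))

theorem ContDiffOn.hasDerivAt_deriv {f : ℝ → ℝ} {s : Set ℝ} {x : ℝ} (hf : ContDiffOn ℝ 2 f s)
    (hx : s ∈ 𝓝 x) : HasDerivAt (deriv f) (deriv (deriv f) x) x :=
  (((hf.contDiffAt hx).derivWithin (m := 1) (by norm_num)).differentiableAt one_ne_zero).hasDerivAt

theorem hasDerivAt_integral_of_continuousOn_Ici {g : ℝ → ℝ} {x : ℝ} (hg : ContinuousOn g (Ici 0))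
    (hx : 0 < x) : HasDerivAt (fun r => ∫ ρ in (0:ℝ)..r, g ρ) (g x) x :=
  intervalIntegral.integral_hasDerivAt_right
    (hg.mono (uIcc_of_le hx.le ▸ Icc_subset_Ici_self)).intervalIntegrable
    ((hg.mono Ioi_subset_Ici_self).stronglyMeasurableAtFilter isOpen_Ioi x hx)
    (hg.continuousAt (Ici_mem_nhds hx))

theorem isBigO_sub_id_of_isBigO_exp {ψ : ℝ → ℝ} {c c' : ℝ}
    (hψ : ψ =O[atTop] fun r => exp (c' * r)) (hc' : c' ≤ c) (hc : 0 < c) :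
    (fun r => ψ r - r) =O[atTop] fun r => exp (c * r) := by
  have hexp : (fun r => exp (c' * r)) =O[atTop] fun r => exp (c * r) :=
    IsBigO.of_bound 1 <| by
      filter_upwards [eventually_ge_atTop 0] with r hr
      simp only [norm_eq_abs, abs_exp, one_mul, exp_le_exp]
      nlinarith
  have hid : (fun r : ℝ => r) =O[atTop] fun r => exp (c * r) := by
    simpa using (isLittleO_pow_exp_pos_mul_atTop 1 hc).isBigO
  exact (hψ.trans hexp).sub hid

theorem nonpos_of_second_deriv_pos_at_crit {v v' v'' : ℝ → ℝ} {a : ℝ}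
    (hv : ∀ x ≥ a, HasDerivAt v (v' x) x) (hv' : ∀ x > a, HasDerivAt v' (v'' x) x)
    (ha : v a ≤ 0) (hatTop : ∀ᶠ x in atTop, v x ≤ 0)
    (hcrit : ∀ x > a, 0 < v x → v' x = 0 → 0 < v'' x) :
    ∀ x ≥ a, v x ≤ 0 := by
  intro x hx
  by_contra! hvx
  obtain ⟨R, hvR, hxR⟩ := (hatTop.and (eventually_ge_atTop x)).exists
  obtain ⟨y, hy, hmax⟩ := isCompact_Icc.exists_isMaxOn ⟨x, hx, hxR⟩
    fun z hz => (hv z hz.1).continuousAt.continuousWithinAt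
  have hvy : 0 < v y := hvx.trans_le (hmax ⟨hx, hxR⟩)
  have hay : a < y := hy.1.lt_of_ne (by rintro rfl; linarith)
  have hyR : y < R := hy.2.lt_of_ne (by rintro rfl; linarith)
  have hloc : IsLocalMax v y := hmax.isLocalMax (Icc_mem_nhds hay hyR)
  have hderiv : ∀ᶠ z in 𝓝 y, HasDerivAt v (v' z) z :=
    (eventually_gt_nhds hay).mono fun z hz => hv z hz.le
  have hconcave := hloc.second_deriv_nonpos hderiv (hv' y hay)
  have hconvex := hcrit y hay hvy (hloc.hasDerivAt_eq_zero (hv y hay.le))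
  linarith

section Comparison

variable {B q χ χ' χ'' W W' W'' : ℝ → ℝ} {a : ℝ}

theorem le_max_add_mul_of_supersolution {δ : ℝ} (hδ : 0 < δ)
    (hχ : ∀ x ≥ a, HasDerivAt χ (χ' x) x) (hχ' : ∀ x > a, HasDerivAt χ' (χ'' x) x)
    (hode : ∀ x > a, χ'' x = B x * χ' x + q x * χ x) (hq : ∀ x > a, 0 ≤ q x)
    (hW : ∀ x ≥ a, HasDerivAt W (W' x) x) (hW' : ∀ x > a, HasDerivAt W' (W'' x) x)
    (hW_nonneg : ∀ x ≥ a, 0 ≤ W x) (hW_super : ∀ x > a, W'' x < B x * W' x)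
    (hχW : χ =o[atTop] W) :
    ∀ x ≥ a, χ x ≤ max (χ a) 0 + δ * W x := by
  set M := max (χ a) 0
  have hM : χ a ≤ M ∧ 0 ≤ M := ⟨le_max_left _ _, le_max_right _ _⟩
  have hv := nonpos_of_second_deriv_pos_at_crit (v := fun x => χ x - M - δ * W x)
    (v' := fun x => χ' x - δ * W' x) (v'' := fun x => χ'' x - δ * W'' x)
    (fun x hx => ((hχ x hx).sub_const M).sub ((hW x hx).const_mul δ))
    (fun x hx => (hχ' x hx).sub ((hW' x hx).const_mul δ))
    (by nlinarith [hW_nonneg a le_rfl])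
    (by
      filter_upwards [hχW.bound hδ, eventually_ge_atTop a] with x hx hax
      rw [Real.norm_eq_abs, Real.norm_eq_abs, abs_of_nonneg (hW_nonneg x hax)] at hx
      linarith [le_abs_self (χ x)])
    (fun x hx hvx hcrit => by
      have hχx : 0 ≤ χ x := by nlinarith [hW_nonneg x hx.le]
      calc 0 ≤ q x * χ x := mul_nonneg (hq x hx) hχx
        _ = B x * (χ' x - δ * W' x) + q x * χ x := by rw [hcrit]; ring
        _ < χ'' x - δ * W'' x := by rw [hode x hx]; nlinarith [hW_super x hx])
  exact fun x hx => by linarith [hv x hx]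

theorem le_max_of_barrier
    (hχ : ∀ x ≥ a, HasDerivAt χ (χ' x) x) (hχ' : ∀ x > a, HasDerivAt χ' (χ'' x) x)
    (hode : ∀ x > a, χ'' x = B x * χ' x + q x * χ x) (hq : ∀ x > a, 0 ≤ q x)
    (hW : ∀ x ≥ a, HasDerivAt W (W' x) x) (hW' : ∀ x > a, HasDerivAt W' (W'' x) x)
    (hW_nonneg : ∀ x ≥ a, 0 ≤ W x) (hW_super : ∀ x > a, W'' x < B x * W' x)
    (hχW : χ =o[atTop] W) :
    ∀ x ≥ a, χ x ≤ max (χ a) 0 := by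
  intro x hx
  have hlim : Tendsto (fun δ => max (χ a) 0 + δ * W x) (𝓝[>] 0) (𝓝 (max (χ a) 0)) := by
    have : Continuous fun δ : ℝ => max (χ a) 0 + δ * W x := by fun_prop
    simpa using (this.tendsto 0).mono_left nhdsWithin_le_nhds
  refine ge_of_tendsto hlim (eventually_mem_nhdsWithin.mono fun δ hδ => ?_)
  exact le_max_add_mul_of_supersolution hδ hχ hχ' hode hq hW hW' hW_nonneg hW_super hχW x hx

end Comparison

theorem nonpos_of_forall_le_max {χ : ℝ → ℝ} {a : ℝ} (hχ : ContinuousWithinAt χ (Ioi a) a)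
    (hχa : χ a = 0) (h : ∀ b > a, ∀ x ≥ b, χ x ≤ max (χ b) 0) : ∀ x > a, χ x ≤ 0 := by
  intro x hx
  have hlim : Tendsto (fun b => max (χ b) 0) (𝓝[>] a) (𝓝 0) := by
    simpa [hχa] using hχ.tendsto.max (tendsto_const_nhds (x := (0:ℝ)))
  refine ge_of_tendsto hlim ?_
  filter_upwards [Ioc_mem_nhdsGT hx] with b hb using h b hb.1 x hb.2

/-- The factor `x ^ (-m)` absorbs a first-order coefficient bounded by `m / x`. -/
noncomputable def barrierWeight (K : ℝ → ℝ) (θ m x : ℝ) : ℝ := exp (K x - θ * x - m * log x)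

noncomputable def barrier (K : ℝ → ℝ) (θ m a x : ℝ) : ℝ := ∫ s in a..x, barrierWeight K θ m s

section Barrier

variable {K k : ℝ → ℝ} {θ m : ℝ}

theorem hasDerivAt_barrierWeight {x : ℝ} (hK : HasDerivAt K (k x) x) (hx : 0 < x) :
    HasDerivAt (barrierWeight K θ m) (barrierWeight K θ m x * (k x - θ - m / x)) x := by
  have hexponent : HasDerivAt (fun y => K y - θ * y - m * log y) (k x - θ - m / x) x := by
    simpa [div_eq_mul_inv] using
      (hK.fun_sub ((hasDerivAt_id x).const_mul θ)).fun_sub ((hasDerivAt_log hx.ne').const_mul m)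
  exact hexponent.exp

theorem continuousOn_barrierWeight (hK : ∀ x > 0, HasDerivAt K (k x) x) :
    ContinuousOn (barrierWeight K θ m) (Ioi 0) :=
  fun x hx => (hasDerivAt_barrierWeight (hK x hx) hx).continuousAt.continuousWithinAt

theorem eventually_exp_le_barrierWeight {κ : ℝ} (hK : ∀ x > 0, HasDerivAt K (k x) x)
    (hk : ∀ᶠ x in atTop, κ ≤ k x) (hθ : 0 < θ) :
    ∃ A > 0, ∀ᶠ x in atTop, A * exp ((κ - 2 * θ) * x) ≤ barrierWeight K θ m x := by
  obtain ⟨r₀, hr₀⟩ := eventually_atTop.1 (hk.and (eventually_gt_atTop 0))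
  have hK_lin : ∀ x ≥ r₀, κ * (x - r₀) ≤ K x - K r₀ := by
    refine fun x hx =>
      (convex_Ici r₀).mul_sub_le_image_sub_of_le_deriv ?_ ?_ ?_ r₀ self_mem_Ici x hx hx
    · exact fun y hy => (hK y (hr₀ y hy).2).continuousAt.continuousWithinAt
    · exact fun y hy =>
        (hK y (hr₀ y (interior_subset hy)).2).differentiableAt.differentiableWithinAt
    · intro y hy
      have hy := hr₀ y (interior_subset hy)
      exact (hK y hy.2).deriv ▸ hy.1
  have hlog : ∀ᶠ x in atTop, m * log x ≤ θ * x := by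
    filter_upwards [(isLittleO_log_id_atTop.const_mul_left m).bound hθ,
      eventually_ge_atTop 0] with x hx hx0
    rw [Real.norm_eq_abs, Real.norm_eq_abs, id, abs_of_nonneg hx0] at hx
    exact (le_abs_self _).trans hx
  refine ⟨exp (K r₀ - κ * r₀), exp_pos _, ?_⟩
  filter_upwards [hlog, eventually_ge_atTop r₀] with x hlogx hx
  rw [barrierWeight, ← exp_add, exp_le_exp]
  linarith [hK_lin x hx]

theorem hasDerivAt_barrier {a x : ℝ} (hK : ∀ x > 0, HasDerivAt K (k x) x) (ha : 0 < a)
    (hx : 0 < x) : HasDerivAt (barrier K θ m a) (barrierWeight K θ m x) x := by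
  have hcont := continuousOn_barrierWeight (θ := θ) (m := m) hK
  refine intervalIntegral.integral_hasDerivAt_right (hcont.mono ?_).intervalIntegrable
    (hcont.stronglyMeasurableAtFilter isOpen_Ioi x hx) (hcont.continuousAt (Ioi_mem_nhds hx))
  intro y hy
  rcases mem_uIcc.1 hy with h | h
  exacts [ha.trans_le h.1, hx.trans_le h.1]

theorem barrier_nonneg {a x : ℝ} (hx : a ≤ x) : 0 ≤ barrier K θ m a x :=
  intervalIntegral.integral_nonneg hx fun _ _ => (exp_pos _).le

theorem eventually_exp_le_barrier {κ a : ℝ} (hK : ∀ x > 0, HasDerivAt K (k x) x)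
    (hk : ∀ᶠ x in atTop, κ ≤ k x) (hθ : 0 < θ) (ha : 0 < a) :
    ∃ A > 0, ∀ᶠ x in atTop, A * exp ((κ - 2 * θ) * x) ≤ barrier K θ m a x := by
  set γ := κ - 2 * θ
  obtain ⟨A, hA, hAp⟩ := eventually_exp_le_barrierWeight (m := m) hK hk hθ
  obtain ⟨S, hS⟩ := eventually_atTop.1 hAp
  refine ⟨A * exp (-|γ|), by positivity, ?_⟩
  filter_upwards [eventually_ge_atTop (S + 1), eventually_ge_atTop (a + 1)] with x hxS hxa
  -- mean value theorem on `[x - 1, x]`, using `barrier K θ m a (x - 1) ≥ 0`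
  obtain ⟨ξ, hξ, hslope⟩ := exists_hasDerivAt_eq_slope (barrier K θ m a) (barrierWeight K θ m)
    (sub_one_lt x)
    (fun y hy => (hasDerivAt_barrier hK ha (by linarith [hy.1])).continuousAt.continuousWithinAt)
    (fun y hy => hasDerivAt_barrier hK ha (by linarith [hy.1]))
  rw [sub_sub_cancel, div_one] at hslope
  have hW := barrier_nonneg (K := K) (θ := θ) (m := m) (by linarith : a ≤ x - 1)
  have hγ : γ * x - |γ| ≤ γ * ξ := by
    nlinarith [abs_mul_abs_self γ, neg_abs_le γ, le_abs_self γ, hξ.1, hξ.2]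
  calc A * exp (-|γ|) * exp (γ * x) = A * exp (γ * x - |γ|) := by
        rw [mul_assoc, ← exp_add]; ring_nf
    _ ≤ A * exp (γ * ξ) := by gcongr
    _ ≤ barrierWeight K θ m ξ := hS ξ (by linarith [hξ.1])
    _ ≤ barrier K θ m a x := by linarith

theorem isLittleO_exp_barrier {κ c a : ℝ} (hK : ∀ x > 0, HasDerivAt K (k x) x)
    (hk : ∀ᶠ x in atTop, κ ≤ k x) (hθ : 0 < θ) (ha : 0 < a) (hc : c < κ - 2 * θ) :
    (fun x => exp (c * x)) =o[atTop] barrier K θ m a := by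
  obtain ⟨A, hA, hlower⟩ := eventually_exp_le_barrier (m := m) hK hk hθ ha
  have hexp : (fun x => exp (c * x)) =o[atTop] fun x => exp ((κ - 2 * θ) * x) :=
    isLittleO_exp_comp_exp_comp.2 <| by
      simpa [← sub_mul] using tendsto_id.const_mul_atTop (sub_pos.2 hc)
  refine hexp.trans_isBigO (IsBigO.of_bound A⁻¹ ?_)
  filter_upwards [hlower] with x hx
  rw [Real.norm_of_nonneg (exp_pos _).le,
    Real.norm_of_nonneg ((by positivity : (0:ℝ) ≤ _).trans hx), inv_mul_eq_div,
    le_div_iff₀' hA]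
  exact hx

end Barrier

section ODE

variable {k K a q χ χ' χ'' : ℝ → ℝ} {m κ c : ℝ}

theorem nonpos_of_ode_of_isBigO
    (hK : ∀ x > 0, HasDerivAt K (k x) x) (hk : ∀ᶠ x in atTop, κ ≤ k x)
    (ha : ∀ x > 0, a x ≤ m / x) (hq : ∀ x > 0, 0 ≤ q x)
    (hχ : ∀ x > 0, HasDerivAt χ (χ' x) x) (hχ' : ∀ x > 0, HasDerivAt χ' (χ'' x) x)
    (hode : ∀ x > 0, χ'' x = (k x - a x) * χ' x + q x * χ x)
    (hχ_cont : ContinuousWithinAt χ (Ioi 0) 0) (hχ_zero : χ 0 = 0)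
    (hc : c < κ) (hχ_growth : χ =O[atTop] fun x => exp (c * x)) :
    ∀ x > 0, χ x ≤ 0 := by
  set θ := (κ - c) / 4
  have hθ : 0 < θ := div_pos (sub_pos.2 hc) four_pos
  refine nonpos_of_forall_le_max hχ_cont hχ_zero fun b hb => ?_
  refine le_max_of_barrier (B := fun x => k x - a x) (W := barrier K θ m b)
    (W' := barrierWeight K θ m) (W'' := fun x => barrierWeight K θ m x * (k x - θ - m / x))
    (fun x hx => hχ x (hb.trans_le hx)) (fun x hx => hχ' x (hb.trans hx))
    (fun x hx => hode x (hb.trans hx)) (fun x hx => hq x (hb.trans hx))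
    (fun x hx => hasDerivAt_barrier hK hb (hb.trans_le hx))
    (fun x hx => hasDerivAt_barrierWeight (hK x (hb.trans hx)) (hb.trans hx))
    (fun x hx => barrier_nonneg hx) (fun x hx => ?_)
    (hχ_growth.trans_isLittleO (isLittleO_exp_barrier hK hk hθ hb (by simp only [θ]; linarith)))
  have hp : 0 < barrierWeight K θ m x := exp_pos _
  nlinarith [ha x (hb.trans hx)]

theorem eq_zero_of_ode_of_isBigO
    (hK : ∀ x > 0, HasDerivAt K (k x) x) (hk : ∀ᶠ x in atTop, κ ≤ k x)
    (ha : ∀ x > 0, a x ≤ m / x) (hq : ∀ x > 0, 0 ≤ q x)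
    (hχ : ∀ x > 0, HasDerivAt χ (χ' x) x) (hχ' : ∀ x > 0, HasDerivAt χ' (χ'' x) x)
    (hode : ∀ x > 0, χ'' x = (k x - a x) * χ' x + q x * χ x)
    (hχ_cont : ContinuousWithinAt χ (Ioi 0) 0) (hχ_zero : χ 0 = 0)
    (hc : c < κ) (hχ_growth : χ =O[atTop] fun x => exp (c * x)) :
    ∀ x ≥ 0, χ x = 0 := by
  have hle := nonpos_of_ode_of_isBigO hK hk ha hq hχ hχ' hode hχ_cont hχ_zero hc hχ_growth
  have hge := nonpos_of_ode_of_isBigO (χ := fun x => -χ x) (χ'' := fun x => -χ'' x) hK hk ha hq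
    (fun x hx => (hχ x hx).neg) (fun x hx => (hχ' x hx).neg)
    (fun x hx => by rw [hode x hx]; ring) hχ_cont.neg (by simp [hχ_zero]) hc hχ_growth.neg_left
  intro x hx
  rcases hx.eq_or_lt with rfl | hx
  · exact hχ_zero
  · linarith [hle x hx, hge x hx]

end ODE

theorem stmt7_general (d : ℕ) (hd : 1 ≤ d) (β ε : ℝ) (hβ : 0 < β) (hε : 0 < ε)
    (f b σ η : ℝ → ℝ)
    (hbc : ContinuousOn b (Ici 0))
    (hσc : ContinuousOn σ (Ici 0))
    (hσε : ∀ r ∈ Ici (0:ℝ), ε ≤ σ r)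
    (hfb : f = b)
    (g h G : ℝ → ℝ)
    (hg : ∀ r, g r = 2 * r * b r / (σ r) ^ 2)
    (hh : ∀ r, h r = 2 * r * f r / (σ r) ^ 2)
    (hG : ∀ r, G r = ∫ ρ in (0:ℝ)..r, g ρ)
    (H1 : ∃ r₀ ≥ (1:ℝ), ∀ r ≥ r₀, ε ≤ g r) :
    (∀ r > (0:ℝ), deriv (deriv (fun x : ℝ => x)) r
        - (β * g r - ((d : ℝ) - 1) / (r * (1 + η r ^ 2))) * deriv (fun x : ℝ => x) r
        - ((d : ℝ) - 1) / (r ^ 2 * (1 + η r ^ 2)) * r + β * h r = 0) ∧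
    ∀ ψ : ℝ → ℝ, ContDiffOn ℝ 2 ψ (Ici 0) → ψ 0 = 0 →
      (∀ r > (0:ℝ), deriv (deriv ψ) r
          - (β * g r - ((d : ℝ) - 1) / (r * (1 + η r ^ 2))) * deriv ψ r
          - ((d : ℝ) - 1) / (r ^ 2 * (1 + η r ^ 2)) * ψ r + β * h r = 0) →
      (∃ ε'' < β * ε / 2, ψ =O[atTop] fun r => Real.exp (ε'' * r)) →
      ∀ r ∈ Ici (0:ℝ), ψ r = r := by
  have hhg : h = g := funext fun r => by rw [hh, hg, hfb]
  have hcancel : ∀ r > (0:ℝ), ((d : ℝ) - 1) / (r ^ 2 * (1 + η r ^ 2)) * r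
      = ((d : ℝ) - 1) / (r * (1 + η r ^ 2)) := fun r hr => by
    have : 0 < 1 + η r ^ 2 := by positivity
    field_simp
  refine ⟨fun r hr => by simp [hhg, hcancel r hr],
    fun ψ hψ hψ0 hode ⟨ε'', hε'', hψ_growth⟩ r hr => ?_⟩
  have hgc : ContinuousOn g (Ici 0) :=
    (((continuousOn_const.mul continuousOn_id).mul hbc).div (hσc.pow 2) fun r hr =>
      pow_ne_zero 2 (hε.trans_le (hσε r hr)).ne').congr fun r _ => hg r
  have hd1 : (0:ℝ) ≤ d - 1 := sub_nonneg.2 (by exact_mod_cast hd)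
  obtain ⟨r₀, -, hr₀⟩ := H1
  refine sub_eq_zero.1 <| eq_zero_of_ode_of_isBigO (K := fun x => β * G x)
    (a := fun x => (d - 1) / (x * (1 + η x ^ 2))) (q := fun x => (d - 1) / (x ^ 2 * (1 + η x ^ 2)))
    (χ := fun x => ψ x - x) (χ' := fun x => deriv ψ x - 1) (m := d - 1) (κ := β * ε)
    (fun x hx => by
      rw [funext hG]
      exact (hasDerivAt_integral_of_continuousOn_Ici hgc hx).const_mul β)
    (eventually_atTop.2 ⟨r₀, fun x hx => mul_le_mul_of_nonneg_left (hr₀ x hx) hβ.le⟩)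
    (fun x hx => div_le_div_of_nonneg_left hd1 hx
      (le_mul_of_one_le_right hx.le (by nlinarith [sq_nonneg (η x)])))
    (fun x hx => div_nonneg hd1 (by positivity))
    (fun x hx => ((hψ.contDiffAt (Ici_mem_nhds hx)).differentiableAt two_ne_zero).hasDerivAt.sub
      (hasDerivAt_id x))
    (fun x hx => (hψ.hasDerivAt_deriv (Ici_mem_nhds hx)).sub_const 1)
    (fun x hx => by
      have hode_x := hode x hx
      rw [hhg] at hode_x
      linear_combination hode_x + hcancel x hx)
    ((hψ.continuousOn.continuousWithinAt self_mem_Ici).mono Ioi_subset_Ici_self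
      |>.sub continuousWithinAt_id)
    (by simp [hψ0]) (by linarith [mul_pos hβ hε])
    (isBigO_sub_id_of_isBigO_exp hψ_growth hε''.le (by positivity)) r hr

/-- Under hypotheses (H) with f = b (so h = g), the identity function solves equation (5),
and it is the unique C² solution on [0,∞) vanishing at 0 with subexponential growth
O(e^{ε″ r}) for some ε″ < βε/2. -/
theorem stmt7 (d : ℕ) (hd : 1 ≤ d) (β ε : ℝ) (hβ : 0 < β) (hε : 0 < ε)
    (f b σ η : ℝ → ℝ)
    (hfc : ContinuousOn f (Ici 0)) (hbc : ContinuousOn b (Ici 0))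
    (hσc : ContinuousOn σ (Ici 0)) (hηc : ContinuousOn η (Ici 0))
    (hσε : ∀ r ∈ Ici (0:ℝ), ε ≤ σ r)
    (hfb : f = b)
    (g h G : ℝ → ℝ)
    (hg : ∀ r, g r = 2 * r * b r / (σ r) ^ 2)
    (hh : ∀ r, h r = 2 * r * f r / (σ r) ^ 2)
    (hG : ∀ r, G r = ∫ ρ in (0:ℝ)..r, g ρ)
    (H1 : ∃ r₀ ≥ (1:ℝ), ∀ r ≥ r₀, ε ≤ g r)
    (H2 : ∃ ε' < β * ε / 2, Tendsto (fun r => Real.exp (-ε' * r) * f r) atTop (nhds 0)) :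
    (∀ r > (0:ℝ), deriv (deriv (fun x : ℝ => x)) r
        - (β * g r - ((d : ℝ) - 1) / (r * (1 + η r ^ 2))) * deriv (fun x : ℝ => x) r
        - ((d : ℝ) - 1) / (r ^ 2 * (1 + η r ^ 2)) * r + β * h r = 0) ∧
    ∀ ψ : ℝ → ℝ, ContDiffOn ℝ 2 ψ (Ici 0) → ψ 0 = 0 →
      (∀ r > (0:ℝ), deriv (deriv ψ) r
          - (β * g r - ((d : ℝ) - 1) / (r * (1 + η r ^ 2))) * deriv ψ r
          - ((d : ℝ) - 1) / (r ^ 2 * (1 + η r ^ 2)) * ψ r + β * h r = 0) →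
      (∃ ε'' < β * ε / 2, ψ =O[atTop] fun r => Real.exp (ε'' * r)) →
      ∀ r ∈ Ici (0:ℝ), ψ r = r :=
  stmt7_general d hd β ε hβ hε f b σ η hbc hσc hσε hfb g h G hg hh hG H1
end

section
/- Let ψ be a C² solution on (0,∞) of equation (5), continuous at 0 with ψ(0) = 0, such that ψ(r) ψ′(r) e^{−βG(r)} μ(r)^{d−1} → 0 both as r → ∞ and as r → 0⁺, and such that the three integrals below converge absolutely. Then ∫₀^∞ ψ′(r)² e^{−βG(r)} μ(r)^{d−1} dr = β ∫₀^∞ ψ(r) h(r) e^{−βG(r)} μ(r)^{d−1} dr − (d−1) ∫₀^∞ ψ(r)² (1+η(r)²)^{−1} r^{−2} e^{−βG(r)} μ(r)^{d−1} dr. -/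
open Filter MeasureTheory Set Topology

/-! With the weight `w = e^{-βG} μ^{d-1}` one has `w' = w (-βg + (d-1)/(r(1+η²)))`, so (5) is the
Sturm–Liouville equation `(w ψ')' = w ((d-1) ψ / (r²(1+η²)) - β h)`. Hence
`(ψ ψ' w)' = ψ'² w + (d-1) ψ² w / (r²(1+η²)) - β ψ h w`, and integrating over `(0, ∞)`, where the
boundary terms vanish, gives the identity. -/

theorem integral_Ioi_of_hasDerivAt_of_tendsto_nhdsGT {E : Type*} [NormedAddCommGroup E]
    [NormedSpace ℝ E] [CompleteSpace E] {F F' : ℝ → E} {l m : E} {x₀ : ℝ}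
    (hderiv : ∀ x ∈ Ioi x₀, HasDerivAt F (F' x) x) (hint : IntegrableOn F' (Ioi x₀))
    (hleft : Tendsto F (𝓝[>] x₀) (𝓝 l)) (htop : Tendsto F atTop (𝓝 m)) :
    ∫ x in Ioi x₀, F' x = m - l := by
  classical
  have hF : ∀ x ∈ Ioi x₀, Function.update F x₀ l =ᶠ[𝓝 x] F := fun x hx =>
    eventually_ne_nhds (ne_of_gt hx) |>.mono fun y hy => Function.update_of_ne hy _ _
  have hcont : ContinuousWithinAt (Function.update F x₀ l) (Ici x₀) x₀ := by
    rwa [continuousWithinAt_update_same, Ici_sdiff_left]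
  have htop' : Tendsto (Function.update F x₀ l) atTop (𝓝 m) :=
    htop.congr' <| (eventually_gt_atTop x₀).mono fun x hx => (Function.update_of_ne hx.ne' _ _).symm
  simpa only [Function.update_self] using integral_Ioi_of_hasDerivAt_of_tendsto hcont
    (fun x hx => (hderiv x hx).congr_of_eventuallyEq (hF x hx)) hint htop'

theorem hasDerivAt_intervalIntegral_of_continuousOn {E : Type*} [NormedAddCommGroup E]
    [NormedSpace ℝ E] [CompleteSpace E] {g : ℝ → E} {s : Set ℝ} {a r : ℝ}
    (hg : ContinuousOn g s) (hs : s ∈ 𝓝 r) (has : uIcc a r ⊆ s) :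
    HasDerivAt (fun u => ∫ x in a..u, g x) (g r) r :=
  intervalIntegral.integral_hasDerivAt_right ((hg.mono has).intervalIntegrable)
    ⟨interior s, interior_mem_nhds.2 hs,
      (hg.mono interior_subset).aestronglyMeasurable isOpen_interior.measurableSet⟩
    (hg.continuousAt hs)

theorem Real.hasDerivAt_exp_mul_exp_pow {A B : ℝ → ℝ} {a b r : ℝ} (n : ℕ)
    (hA : HasDerivAt A a r) (hB : HasDerivAt B b r) :
    HasDerivAt (fun u => Real.exp (A u) * Real.exp (B u) ^ n)
      (Real.exp (A r) * Real.exp (B r) ^ n * (a + n * b)) r := by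
  simp only [← Real.exp_nat_mul, ← Real.exp_add]
  exact (hA.add (hB.const_mul (n : ℝ))).exp

theorem hasDerivAt_radial_weight {β : ℝ} (n : ℕ) {g η : ℝ → ℝ}
    (hg : ContinuousOn g (Ici 0)) (hη : ContinuousOn η (Ioi 0)) {r : ℝ} (hr : 0 < r) :
    HasDerivAt
      (fun u => Real.exp (-(β * ∫ ρ in (0:ℝ)..u, g ρ))
        * Real.exp (∫ s in (1:ℝ)..u, 1 / (s * (1 + η s ^ 2))) ^ n)
      (Real.exp (-(β * ∫ ρ in (0:ℝ)..r, g ρ))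
        * Real.exp (∫ s in (1:ℝ)..r, 1 / (s * (1 + η s ^ 2))) ^ n
        * (-(β * g r) + n * (1 / (r * (1 + η r ^ 2))))) r := by
  have hq : ContinuousOn (fun s => 1 / (s * (1 + η s ^ 2))) (Ioi 0) :=
    continuousOn_const.div (continuousOn_id.mul (continuousOn_const.add (hη.pow 2)))
      fun s (hs : 0 < s) => by positivity
  have hG := hasDerivAt_intervalIntegral_of_continuousOn hg (Ici_mem_nhds hr)
    (uIcc_of_le hr.le ▸ Icc_subset_Ici_self)
  have hlogμ := hasDerivAt_intervalIntegral_of_continuousOn hq (Ioi_mem_nhds hr)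
    fun x hx => lt_of_lt_of_le (lt_min one_pos hr) hx.1
  exact Real.hasDerivAt_exp_mul_exp_pow n (hG.const_mul β).neg hlogμ

theorem hasDerivAt_mul_mul_weight {ψ p w : ℝ → ℝ} {p' k r : ℝ} (hψ : HasDerivAt ψ (p r) r)
    (hp : HasDerivAt p p' r) (hw : HasDerivAt w (w r * k) r) :
    HasDerivAt (fun u => ψ u * p u * w u) (p r ^ 2 * w r + ψ r * w r * (p' + k * p r)) r :=
  ((hψ.mul hp).mul hw).congr_deriv (by simp only [Pi.mul_apply]; ring)

theorem stmt8_general (d : ℕ) (hd : 1 ≤ d) (β : ℝ)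
    (b σ η : ℝ → ℝ)
    (hbc : ContinuousOn b (Ici 0))
    (hσc : ContinuousOn σ (Ici 0)) (hηc : ContinuousOn η (Ici 0))
    (hσ0 : ∀ r ∈ Ici (0:ℝ), σ r ≠ 0)
    (g h G μ : ℝ → ℝ)
    (hg : ∀ r, g r = 2 * r * b r / (σ r) ^ 2)
    (hG : ∀ r, G r = ∫ ρ in (0:ℝ)..r, g ρ)
    (hμ : ∀ r, μ r = Real.exp (∫ s in (1:ℝ)..r, 1 / (s * (1 + η s ^ 2))))
    (ψ : ℝ → ℝ)
    (hψ : ContDiffOn ℝ 2 ψ (Ioi 0))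
    (heq : ∀ r > (0:ℝ), deriv (deriv ψ) r
        - (β * g r - ((d : ℝ) - 1) / (r * (1 + η r ^ 2))) * deriv ψ r
        - ((d : ℝ) - 1) / (r ^ 2 * (1 + η r ^ 2)) * ψ r + β * h r = 0)
    (hbdtop : Tendsto (fun r => ψ r * deriv ψ r * Real.exp (-(β * G r)) * μ r ^ (d - 1))
        atTop (nhds 0))
    (hbd0 : Tendsto (fun r => ψ r * deriv ψ r * Real.exp (-(β * G r)) * μ r ^ (d - 1))
        (nhdsWithin 0 (Ioi 0)) (nhds 0))
    (hint₁ : IntegrableOn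
        (fun r => (deriv ψ r) ^ 2 * Real.exp (-(β * G r)) * μ r ^ (d - 1)) (Ioi 0))
    (hint₂ : IntegrableOn
        (fun r => ψ r * h r * Real.exp (-(β * G r)) * μ r ^ (d - 1)) (Ioi 0))
    (hint₃ : IntegrableOn
        (fun r => (ψ r) ^ 2 * (1 + η r ^ 2)⁻¹ * (r ^ 2)⁻¹ * Real.exp (-(β * G r)) * μ r ^ (d - 1))
        (Ioi 0)) :
    (∫ r in Ioi (0:ℝ), (deriv ψ r) ^ 2 * Real.exp (-(β * G r)) * μ r ^ (d - 1))
      = β * (∫ r in Ioi (0:ℝ), ψ r * h r * Real.exp (-(β * G r)) * μ r ^ (d - 1))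
        - ((d : ℝ) - 1) * ∫ r in Ioi (0:ℝ),
            (ψ r) ^ 2 * (1 + η r ^ 2)⁻¹ * (r ^ 2)⁻¹ * Real.exp (-(β * G r)) * μ r ^ (d - 1) := by
  have hgc : ContinuousOn g (Ici 0) := funext hg ▸
    ((continuousOn_const.mul continuousOn_id).mul hbc).div (hσc.pow 2)
      fun r hr => pow_ne_zero _ (hσ0 r hr)
  have hweight : ∀ r > 0, HasDerivAt (fun u => Real.exp (-(β * G u)) * μ u ^ (d - 1))
      (Real.exp (-(β * G r)) * μ r ^ (d - 1)
        * (-(β * g r) + ((d : ℝ) - 1) * (1 / (r * (1 + η r ^ 2))))) r := by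
    intro r hr
    simpa only [← hG, ← hμ, Nat.cast_sub hd, Nat.cast_one] using
      hasDerivAt_radial_weight (β := β) (d - 1) hgc (hηc.mono Ioi_subset_Ici_self) hr
  have hflux : ∀ r ∈ Ioi (0:ℝ), HasDerivAt
      (fun r => ψ r * deriv ψ r * Real.exp (-(β * G r)) * μ r ^ (d - 1))
      ((deriv ψ r) ^ 2 * Real.exp (-(β * G r)) * μ r ^ (d - 1)
        + ((d : ℝ) - 1) * ((ψ r) ^ 2 * (1 + η r ^ 2)⁻¹ * (r ^ 2)⁻¹ * Real.exp (-(β * G r))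
          * μ r ^ (d - 1))
        - β * (ψ r * h r * Real.exp (-(β * G r)) * μ r ^ (d - 1))) r := by
    intro r (hr : 0 < r)
    have hψ' := ((hψ.differentiableOn two_ne_zero).differentiableAt (Ioi_mem_nhds hr)).hasDerivAt
    have hψ'' := (((hψ.deriv_of_isOpen isOpen_Ioi (by norm_num)).differentiableOn
      one_ne_zero).differentiableAt (Ioi_mem_nhds hr)).hasDerivAt
    refine ((hasDerivAt_mul_mul_weight hψ' hψ'' (hweight r hr)).congr_deriv ?_)
      |>.congr_of_eventuallyEq (Eventually.of_forall fun u => by ring)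
    have hode := heq r hr
    simp only [div_eq_mul_inv, mul_inv] at hode ⊢
    linear_combination (ψ r * Real.exp (-(β * G r)) * μ r ^ (d - 1)) * hode
  have hint₁₃ := hint₁.add (hint₃.const_mul ((d : ℝ) - 1))
  have hzero := integral_Ioi_of_hasDerivAt_of_tendsto_nhdsGT hflux
    (hint₁₃.sub (hint₂.const_mul β)) hbd0 hbdtop
  rw [integral_sub ?_ (hint₂.const_mul β), integral_add hint₁ (hint₃.const_mul _),
    integral_const_mul, integral_const_mul] at hzero
  · linarith
  · exact hint₁₃

/-- Integration by parts identity for a solution ψ of equation (5) with ψ(0)=0 and vanishing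
boundary terms: ∫₀^∞ ψ′² e^{−βG} μ^{d−1} = β ∫₀^∞ ψ h e^{−βG} μ^{d−1}
− (d−1) ∫₀^∞ ψ² (1+η²)⁻¹ r⁻² e^{−βG} μ^{d−1}. -/
theorem stmt8 (d : ℕ) (hd : 1 ≤ d) (β : ℝ) (hβ : 0 < β)
    (f b σ η : ℝ → ℝ)
    (hfc : ContinuousOn f (Ici 0)) (hbc : ContinuousOn b (Ici 0))
    (hσc : ContinuousOn σ (Ici 0)) (hηc : ContinuousOn η (Ici 0))
    (hσ0 : ∀ r ∈ Ici (0:ℝ), σ r ≠ 0)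
    (g h G μ : ℝ → ℝ)
    (hg : ∀ r, g r = 2 * r * b r / (σ r) ^ 2)
    (hh : ∀ r, h r = 2 * r * f r / (σ r) ^ 2)
    (hG : ∀ r, G r = ∫ ρ in (0:ℝ)..r, g ρ)
    (hμ : ∀ r, μ r = Real.exp (∫ s in (1:ℝ)..r, 1 / (s * (1 + η s ^ 2))))
    (ψ : ℝ → ℝ)
    (hψ : ContDiffOn ℝ 2 ψ (Ioi 0))
    (hψ0 : ContinuousWithinAt ψ (Ici 0) 0) (hψ00 : ψ 0 = 0)
    (heq : ∀ r > (0:ℝ), deriv (deriv ψ) r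
        - (β * g r - ((d : ℝ) - 1) / (r * (1 + η r ^ 2))) * deriv ψ r
        - ((d : ℝ) - 1) / (r ^ 2 * (1 + η r ^ 2)) * ψ r + β * h r = 0)
    (hbdtop : Tendsto (fun r => ψ r * deriv ψ r * Real.exp (-(β * G r)) * μ r ^ (d - 1))
        atTop (nhds 0))
    (hbd0 : Tendsto (fun r => ψ r * deriv ψ r * Real.exp (-(β * G r)) * μ r ^ (d - 1))
        (nhdsWithin 0 (Ioi 0)) (nhds 0))
    (hint₁ : IntegrableOn
        (fun r => (deriv ψ r) ^ 2 * Real.exp (-(β * G r)) * μ r ^ (d - 1)) (Ioi 0))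
    (hint₂ : IntegrableOn
        (fun r => ψ r * h r * Real.exp (-(β * G r)) * μ r ^ (d - 1)) (Ioi 0))
    (hint₃ : IntegrableOn
        (fun r => (ψ r) ^ 2 * (1 + η r ^ 2)⁻¹ * (r ^ 2)⁻¹ * Real.exp (-(β * G r)) * μ r ^ (d - 1))
        (Ioi 0)) :
    (∫ r in Ioi (0:ℝ), (deriv ψ r) ^ 2 * Real.exp (-(β * G r)) * μ r ^ (d - 1))
      = β * (∫ r in Ioi (0:ℝ), ψ r * h r * Real.exp (-(β * G r)) * μ r ^ (d - 1))
        - ((d : ℝ) - 1) * ∫ r in Ioi (0:ℝ),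
            (ψ r) ^ 2 * (1 + η r ^ 2)⁻¹ * (r ^ 2)⁻¹ * Real.exp (-(β * G r)) * μ r ^ (d - 1) :=
  stmt8_general d hd β b σ η hbc hσc hηc hσ0 g h G μ hg hG hμ ψ hψ heq hbdtop hbd0 hint₁ hint₂ hint₃
end

section
/- Under hypotheses (H), for every real c with 0 ≤ c < βε, the integral ∫₀^∞ e^{c r} σ(r)^{−2} μ(r)^{d−1} e^{−βG(r)} dr is finite. In particular the equilibrium density ν(r) := σ(r)^{−2} μ(r)^{d−1} e^{−βG(r)} has finite total mass on (0,∞). -/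
/-! Eventually `g ≥ ε`, so `G r ≥ ε r - C` and `e^{-βG}` decays like `e^{-βεr}`; moreover
`σ⁻² ≤ ε⁻²`, and since the integrand defining `log μ` lies between `0` and `1/s`, `μ r ≤ max 1 r`.
Hence the integrand is dominated by a constant times `(1 + r^{d-1}) e^{-(βε - c) r}`, which is
integrable. -/

open Filter MeasureTheory Set Real

theorem continuousOn_primitive_of_isOpen {f : ℝ → ℝ} {s t : Set ℝ} {a : ℝ} (hs : IsOpen s)
    (hst : s ⊆ t) (hf : ContinuousOn f t) (hsub : ∀ x ∈ s, uIcc a x ⊆ t) :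
    ContinuousOn (fun x => ∫ y in a..x, f y) s := by
  intro x hx
  have hfx : ContinuousAt f x := hf.continuousAt (mem_of_superset (hs.mem_nhds hx) hst)
  exact (intervalIntegral.integral_hasDerivAt_right ((hf.mono (hsub x hx)).intervalIntegrable)
    ((hf.mono hst).stronglyMeasurableAtFilter hs x hx) hfx).continuousAt.continuousWithinAt

theorem exists_mul_sub_le_intervalIntegral {g : ℝ → ℝ} {ε r₀ : ℝ} (hε : 0 ≤ ε) (hr₀ : 0 ≤ r₀)
    (hg : ContinuousOn g (Ici 0)) (hgε : ∀ r ≥ r₀, ε ≤ g r) :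
    ∃ C, ∀ x ≥ 0, ε * x - C ≤ ∫ y in (0:ℝ)..x, g y := by
  have hint : ∀ p q : ℝ, 0 ≤ p → 0 ≤ q → IntervalIntegrable g volume p q := fun p q hp hq =>
    (hg.mono (ordConnected_Ici.uIcc_subset hp hq)).intervalIntegrable
  obtain ⟨M, hM⟩ := isCompact_uIcc.exists_bound_of_continuousOn
    (intervalIntegral.continuousOn_primitive_interval
      ((hg.mono (ordConnected_Ici.uIcc_subset le_rfl hr₀)).integrableOn_compact (μ := volume)
        isCompact_uIcc))
  have hbound : ∀ x ∈ uIcc 0 r₀, -M ≤ ∫ y in (0:ℝ)..x, g y := fun x hx =>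
    neg_le_of_abs_le (by simpa only [Real.norm_eq_abs] using hM x hx)
  refine ⟨M + ε * r₀, fun x hx => ?_⟩
  rcases le_total x r₀ with hxr | hxr
  · have := hbound x (by rw [uIcc_of_le hr₀]; exact ⟨hx, hxr⟩)
    nlinarith
  · have htail : ε * (x - r₀) ≤ ∫ y in r₀..x, g y := by
      simpa [mul_comm] using intervalIntegral.integral_mono_on hxr intervalIntegrable_const
        (hint r₀ x hr₀ hx) fun y hy => hgε y hy.1
    rw [← intervalIntegral.integral_add_adjacent_intervals (hint 0 r₀ le_rfl hr₀)
      (hint r₀ x hr₀ hx)]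
    linarith [hbound r₀ right_mem_uIcc]

theorem exp_integral_le_max_one {φ : ℝ → ℝ} (hφc : ContinuousOn φ (Ioi 0))
    (hφ : ∀ s > 0, 0 ≤ φ s ∧ φ s ≤ s⁻¹) {x : ℝ} (hx : 0 < x) :
    exp (∫ s in (1:ℝ)..x, φ s) ≤ max 1 x := by
  have hint : IntervalIntegrable φ volume 1 x :=
    (hφc.mono (ordConnected_Ioi.uIcc_subset one_pos hx)).intervalIntegrable
  rcases le_total x 1 with hx1 | hx1
  · have : ∫ s in (1:ℝ)..x, φ s ≤ 0 := by
      rw [intervalIntegral.integral_symm]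
      exact neg_nonpos.2 (intervalIntegral.integral_nonneg hx1 fun s hs =>
        (hφ s (hx.trans_le hs.1)).1)
    exact (exp_le_one_iff.2 this).trans (le_max_left _ _)
  · have hinv : IntervalIntegrable (fun s : ℝ => s⁻¹) volume 1 x :=
      (continuousOn_inv₀.mono fun s hs =>
        (zero_lt_one.trans_le (by rw [uIcc_of_le hx1] at hs; exact hs.1)).ne').intervalIntegrable
    have : ∫ s in (1:ℝ)..x, φ s ≤ log x := by
      have hlog := integral_inv_of_pos one_pos hx
      rw [div_one] at hlog
      rw [← hlog]
      exact intervalIntegral.integral_mono_on hx1 hint hinv fun s hs =>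
        (hφ s (zero_lt_one.trans_le hs.1)).2
    calc exp (∫ s in (1:ℝ)..x, φ s) ≤ exp (log x) := exp_le_exp.2 this
      _ = x := exp_log hx
      _ ≤ max 1 x := le_max_right _ _

theorem integrableOn_one_add_pow_mul_exp_neg_mul (k : ℕ) {a : ℝ} (ha : 0 < a) :
    IntegrableOn (fun x : ℝ => (1 + x ^ k) * exp (-a * x)) (Ioi 0) := by
  have hpow : IntegrableOn (fun x : ℝ => x ^ k * exp (-a * x)) (Ioi 0) :=
    (integrableOn_rpow_mul_exp_neg_mul_rpow (s := k)
      (neg_one_lt_zero.trans_le k.cast_nonneg) one_pos ha).congr_fun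
      (fun x _ => by simp) measurableSet_Ioi
  exact ((exp_neg_integrableOn_Ioi 0 ha).add hpow).congr_fun
    (fun x _ => by simp only [Pi.add_apply]; ring) measurableSet_Ioi

theorem pow_le_one_add_pow_of_le_max {m r : ℝ} (k : ℕ) (hm : 0 ≤ m) (hr : 0 ≤ r)
    (hmr : m ≤ max 1 r) : m ^ k ≤ 1 + r ^ k :=
  calc m ^ k ≤ max 1 r ^ k := pow_le_pow_left₀ hm hmr k
    _ ≤ 1 + r ^ k := by
      rcases max_cases 1 r with ⟨h, _⟩ | ⟨h, _⟩ <;> rw [h]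
      · simp [pow_nonneg hr]
      · simp

theorem integrableOn_exp_mul_inv_sq_mul_pow_mul_exp_neg {σ μ G : ℝ → ℝ} {ε β c C : ℝ} (k : ℕ)
    (hε : 0 < ε) (hβ : 0 ≤ β) (hc : c < β * ε)
    (hσc : ContinuousOn σ (Ioi 0)) (hσ : ∀ r > 0, ε ≤ σ r)
    (hμc : ContinuousOn μ (Ioi 0)) (hμ : ∀ r > 0, 0 ≤ μ r ∧ μ r ≤ max 1 r)
    (hGc : ContinuousOn G (Ioi 0)) (hG : ∀ r > 0, ε * r - C ≤ G r) :
    IntegrableOn (fun r => exp (c * r) * (σ r ^ 2)⁻¹ * μ r ^ k * exp (-(β * G r))) (Ioi 0) := by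
  have hσ0 : ∀ r ∈ Ioi (0:ℝ), σ r ^ 2 ≠ 0 := fun r hr =>
    pow_ne_zero 2 (hε.trans_le (hσ r hr)).ne'
  have hcont : ContinuousOn
      (fun r => exp (c * r) * (σ r ^ 2)⁻¹ * μ r ^ k * exp (-(β * G r))) (Ioi 0) := by
    fun_prop (disch := exact hσ0)
  refine ((integrableOn_one_add_pow_mul_exp_neg_mul k (sub_pos.2 hc)).const_mul
    ((ε ^ 2)⁻¹ * exp (β * C))).mono' (hcont.aestronglyMeasurable measurableSet_Ioi) ?_
  filter_upwards [ae_restrict_mem measurableSet_Ioi] with r (hr : 0 < r)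
  have hμr := hμ r hr
  rw [Real.norm_of_nonneg (by have := hμr.1; positivity)]
  have hexp : -(β * G r) ≤ β * C - β * ε * r := by
    nlinarith [mul_le_mul_of_nonneg_left (hG r hr) hβ]
  calc exp (c * r) * (σ r ^ 2)⁻¹ * μ r ^ k * exp (-(β * G r))
      ≤ exp (c * r) * (ε ^ 2)⁻¹ * (1 + r ^ k) * exp (β * C - β * ε * r) := by
        gcongr
        · exact pow_nonneg hμr.1 k
        · exact hσ r hr
        · exact pow_le_one_add_pow_of_le_max k hμr.1 hr.le hμr.2
    _ = (ε ^ 2)⁻¹ * exp (β * C) * ((1 + r ^ k) * exp (-(β * ε - c) * r)) := by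
        rw [show β * C - β * ε * r = β * C + -(β * ε - c) * r - c * r by ring, exp_sub, exp_add]
        field_simp

theorem stmt10_general (d : ℕ) (β ε : ℝ) (hβ : 0 < β) (hε : 0 < ε)
    (b σ η : ℝ → ℝ)
    (hbc : ContinuousOn b (Ici 0))
    (hσc : ContinuousOn σ (Ici 0)) (hηc : ContinuousOn η (Ici 0))
    (hσε : ∀ r ∈ Ici (0:ℝ), ε ≤ σ r)
    (g G μ : ℝ → ℝ)
    (hg : ∀ r, g r = 2 * r * b r / (σ r) ^ 2)
    (hG : ∀ r, G r = ∫ ρ in (0:ℝ)..r, g ρ)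
    (hμ : ∀ r, μ r = Real.exp (∫ s in (1:ℝ)..r, 1 / (s * (1 + η s ^ 2))))
    (H1 : ∃ r₀ ≥ (1:ℝ), ∀ r ≥ r₀, ε ≤ g r) :
    (∀ c : ℝ, 0 ≤ c → c < β * ε →
      IntegrableOn
        (fun r => Real.exp (c * r) * (σ r ^ 2)⁻¹ * μ r ^ (d - 1) * Real.exp (-(β * G r)))
        (Ioi 0)) ∧
    IntegrableOn (fun r => (σ r ^ 2)⁻¹ * μ r ^ (d - 1) * Real.exp (-(β * G r))) (Ioi 0) := by
  obtain ⟨r₀, hr₀, hgε⟩ := H1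
  have hσ0 : ∀ r ∈ Ici (0:ℝ), σ r ^ 2 ≠ 0 := fun r hr =>
    pow_ne_zero 2 (hε.trans_le (hσε r hr)).ne'
  have hgc : ContinuousOn g (Ici 0) :=
    (ContinuousOn.div (by fun_prop) (hσc.pow 2) hσ0).congr fun r _ => hg r
  have hηc' : ContinuousOn η (Ioi 0) := hηc.mono Ioi_subset_Ici_self
  have hφc : ContinuousOn (fun s => 1 / (s * (1 + η s ^ 2))) (Ioi 0) :=
    ContinuousOn.div (by fun_prop) (by fun_prop) fun s (hs : 0 < s) => by positivity
  have hφ : ∀ s > 0, 0 ≤ 1 / (s * (1 + η s ^ 2)) ∧ 1 / (s * (1 + η s ^ 2)) ≤ s⁻¹ :=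
    fun s hs => ⟨by positivity, by
      rw [one_div]
      exact inv_anti₀ hs (le_mul_of_one_le_right hs.le (le_add_of_nonneg_right (sq_nonneg _)))⟩
  obtain ⟨C, hC⟩ := exists_mul_sub_le_intervalIntegral hε.le (by linarith) hgc hgε
  have hμc : ContinuousOn μ (Ioi 0) :=
    (continuous_exp.comp_continuousOn (continuousOn_primitive_of_isOpen isOpen_Ioi subset_rfl
      hφc fun x hx => ordConnected_Ioi.uIcc_subset one_pos hx)).congr fun r _ => hμ r
  have hGc : ContinuousOn G (Ioi 0) :=
    (continuousOn_primitive_of_isOpen isOpen_Ioi Ioi_subset_Ici_self hgc fun x hx =>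
      ordConnected_Ici.uIcc_subset (mem_Ici.2 le_rfl) (mem_Ici.2 hx.le)).congr fun r _ => hG r
  have key : ∀ c < β * ε, IntegrableOn
      (fun r => exp (c * r) * (σ r ^ 2)⁻¹ * μ r ^ (d - 1) * exp (-(β * G r))) (Ioi 0) :=
    fun c hc => integrableOn_exp_mul_inv_sq_mul_pow_mul_exp_neg (d - 1) hε hβ.le hc
      (hσc.mono Ioi_subset_Ici_self) (fun r hr => hσε r hr.le) hμc
      (fun r hr => ⟨by rw [hμ]; positivity, hμ r ▸ exp_integral_le_max_one hφc hφ hr⟩) hGc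
      (fun r hr => hG r ▸ hC r hr.le)
  exact ⟨fun c _ hc => key c hc, by simpa using key 0 (by positivity)⟩

/-- Under hypotheses (H), for every 0 ≤ c < βε the integral
∫₀^∞ e^{cr} σ(r)⁻² μ(r)^{d−1} e^{−βG(r)} dr is finite; in particular the equilibrium
density ν = σ⁻² μ^{d−1} e^{−βG} has finite total mass on (0,∞). -/
theorem stmt10 (d : ℕ) (hd : 1 ≤ d) (β ε : ℝ) (hβ : 0 < β) (hε : 0 < ε)
    (f b σ η : ℝ → ℝ)
    (hfc : ContinuousOn f (Ici 0)) (hbc : ContinuousOn b (Ici 0))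
    (hσc : ContinuousOn σ (Ici 0)) (hηc : ContinuousOn η (Ici 0))
    (hσε : ∀ r ∈ Ici (0:ℝ), ε ≤ σ r)
    (g G μ : ℝ → ℝ)
    (hg : ∀ r, g r = 2 * r * b r / (σ r) ^ 2)
    (hG : ∀ r, G r = ∫ ρ in (0:ℝ)..r, g ρ)
    (hμ : ∀ r, μ r = Real.exp (∫ s in (1:ℝ)..r, 1 / (s * (1 + η s ^ 2))))
    (H1 : ∃ r₀ ≥ (1:ℝ), ∀ r ≥ r₀, ε ≤ g r)
    (H2 : ∃ ε' < β * ε / 2, Tendsto (fun r => Real.exp (-ε' * r) * f r) atTop (nhds 0)) :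
    (∀ c : ℝ, 0 ≤ c → c < β * ε →
      IntegrableOn
        (fun r => Real.exp (c * r) * (σ r ^ 2)⁻¹ * μ r ^ (d - 1) * Real.exp (-(β * G r)))
        (Ioi 0)) ∧
    IntegrableOn (fun r => (σ r ^ 2)⁻¹ * μ r ^ (d - 1) * Real.exp (-(β * G r))) (Ioi 0) :=
  stmt10_general d β ε hβ hε b σ η hbc hσc hηc hσε g G μ hg hG hμ H1
end

section
/- Suppose d = 1 and hypotheses (H) hold. Then the function ψ(r) := β ∫₀^r e^{βG(ρ)} ( ∫_ρ^∞ e^{−βG(s)} h(s) ds ) dρ is well defined (all integrals converge absolutely), is C² on [0,∞), satisfies ψ(0) = 0, and solves ψ″(r) − β g(r) ψ′(r) + β h(r) = 0 for all r > 0. -/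
open Filter MeasureTheory Set

/-!
Beyond `r₀` the primitive `G` grows at least like `ε r`, so `e^{-βG(s)}` decays like
`e^{-βεs}`, which beats the growth `s e^{ε's}` of `h`; hence the tail integrals
`T(ρ) = ∫_ρ^∞ e^{-βG} h` converge. The function `q = e^{βG} T` then satisfies
`q' = β g q - h`, and `ψ = β ∫₀^r q` gives `ψ' = β q` and `ψ'' = β g ψ' - β h`.
-/

open Asymptotics Real Topology

lemma hasDerivWithinAt_integral_Ici {u : ℝ → ℝ} {a r : ℝ} (hu : ContinuousOn u (Ici a))
    (hr : a ≤ r) : HasDerivWithinAt (fun x => ∫ t in a..x, u t) (u r) (Ici a) r := by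
  have hint : IntervalIntegrable u volume a r :=
    (hu.mono (by rw [uIcc_of_le hr]; exact Icc_subset_Ici_self)).intervalIntegrable
  have hmeas : AEStronglyMeasurable u (volume.restrict (Ici a)) :=
    hu.aestronglyMeasurable measurableSet_Ici
  rcases hr.eq_or_lt with rfl | har
  · exact intervalIntegral.integral_hasDerivWithinAt_right (t := Ioi a) hint
      ⟨Ici a, mem_of_superset self_mem_nhdsWithin Ioi_subset_Ici_self, hmeas⟩
      ((hu a self_mem_Ici).mono Ioi_subset_Ici_self)
  · exact (intervalIntegral.integral_hasDerivAt_right hint ⟨Ici a, Ici_mem_nhds har, hmeas⟩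
      (hu.continuousAt (Ici_mem_nhds har))).hasDerivWithinAt

lemma hasDerivWithinAt_integral_Ioi {c : ℝ → ℝ} {a r : ℝ} (hc : ContinuousOn c (Ici a))
    (hci : IntegrableOn c (Ioi a)) (hr : a ≤ r) :
    HasDerivWithinAt (fun ρ => ∫ s in Ioi ρ, c s) (-c r) (Ici a) r := by
  have htail : ∀ ρ ∈ Ici a, ∫ s in Ioi ρ, c s = (∫ s in Ioi a, c s) - ∫ t in a..ρ, c t :=
    fun ρ hρ => by rw [← intervalIntegral.integral_Ioi_sub_Ioi hci hρ, sub_sub_cancel]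
  exact ((hasDerivWithinAt_integral_Ici hc hr).const_sub _).congr htail (htail r hr)

lemma contDiffOn_succ_of_hasDerivWithinAt {F F' : ℝ → ℝ} {s : Set ℝ} {n : ℕ}
    (hs : UniqueDiffOn ℝ s) (hF : ∀ x ∈ s, HasDerivWithinAt F (F' x) s x)
    (hF' : ContDiffOn ℝ n F' s) : ContDiffOn ℝ (n + 1) F s :=
  (contDiffOn_succ_iff_derivWithin hs).2 ⟨fun x hx => (hF x hx).differentiableWithinAt,
    by simp, hF'.congr fun x hx => (hF x hx).derivWithin (hs x hx)⟩

lemma deriv_deriv_eq_of_hasDerivWithinAt_Ici {F F' : ℝ → ℝ} {F'' a r : ℝ}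
    (hF : ∀ x ∈ Ici a, HasDerivWithinAt F (F' x) (Ici a) x)
    (hF' : HasDerivWithinAt F' F'' (Ici a) r) (hr : a < r) :
    deriv (deriv F) r = F'' := by
  have hderiv : deriv F =ᶠ[𝓝 r] F' := by
    filter_upwards [Ioi_mem_nhds hr] with x (hx : a < x)
    exact ((hF x hx.le).hasDerivAt (Ici_mem_nhds hx)).deriv
  exact ((hF'.hasDerivAt (Ici_mem_nhds hr)).congr_of_eventuallyEq hderiv).deriv

lemma continuousOn_mul_div_sq {f σ : ℝ → ℝ} {ε : ℝ} (hε : 0 < ε)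
    (hf : ContinuousOn f (Ici 0)) (hσ : ContinuousOn σ (Ici 0))
    (hσε : ∀ r ∈ Ici (0:ℝ), ε ≤ σ r) :
    ContinuousOn (fun r => 2 * r * f r / σ r ^ 2) (Ici 0) :=
  ((continuousOn_const.mul continuousOn_id).mul hf).div (hσ.pow 2)
    fun r hr => pow_ne_zero 2 (hε.trans_le (hσε r hr)).ne'

lemma isBigO_mul_div_sq {f σ : ℝ → ℝ} {ε : ℝ} (hε : 0 < ε) (hσε : ∀ r ∈ Ici (0:ℝ), ε ≤ σ r) :
    (fun r => 2 * r * f r / σ r ^ 2) =O[atTop] fun r => r * f r := by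
  refine IsBigO.of_bound (2 / ε ^ 2) ?_
  filter_upwards [eventually_ge_atTop 0] with r hr
  have hσ2 : ε ^ 2 ≤ σ r ^ 2 := pow_le_pow_left₀ hε.le (hσε r hr) 2
  calc ‖2 * r * f r / σ r ^ 2‖ = 2 * ‖r * f r‖ / σ r ^ 2 := by
        rw [norm_div, norm_pow, Real.norm_eq_abs (σ r), sq_abs, mul_assoc, norm_mul, Real.norm_two]
    _ ≤ 2 * ‖r * f r‖ / ε ^ 2 := by gcongr
    _ = 2 / ε ^ 2 * ‖r * f r‖ := by ring

lemma integral_add_mul_sub_le {g : ℝ → ℝ} {ε r₀ s : ℝ} (hg : ContinuousOn g (Ici 0))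
    (hr₀ : 0 ≤ r₀) (hgε : ∀ r ≥ r₀, ε ≤ g r) (hs : r₀ ≤ s) :
    (∫ t in 0..r₀, g t) + ε * (s - r₀) ≤ ∫ t in 0..s, g t := by
  have hint : ∀ a b, 0 ≤ a → a ≤ b → IntervalIntegrable g volume a b := fun a b ha hab =>
    (hg.mono (by rw [uIcc_of_le hab]; exact fun x hx => ha.trans hx.1)).intervalIntegrable
  rw [← intervalIntegral.integral_add_adjacent_intervals (hint 0 r₀ le_rfl hr₀)
    (hint r₀ s hr₀ hs)]
  have := intervalIntegral.integral_mono_on hs intervalIntegrable_const (hint r₀ s hr₀ hs)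
    fun x hx => hgε x hx.1
  simp only [intervalIntegral.integral_const, smul_eq_mul] at this
  linarith

lemma isBigO_exp_neg_of_linear_le {G : ℝ → ℝ} {β ε r₀ : ℝ} (hβ : 0 ≤ β)
    (hG : ∀ s ≥ r₀, G r₀ + ε * (s - r₀) ≤ G s) :
    (fun s => exp (-(β * G s))) =O[atTop] fun s => exp (-(β * ε) * s) := by
  refine IsBigO.of_bound (exp (β * ε * r₀ - β * G r₀)) ?_
  filter_upwards [eventually_ge_atTop r₀] with s hs
  rw [norm_of_nonneg (exp_pos _).le, norm_of_nonneg (exp_pos _).le, ← exp_add, exp_le_exp]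
  nlinarith [hG s hs]

lemma isBigO_exp_of_tendsto_exp_neg_mul {f : ℝ → ℝ} {k : ℝ}
    (hf : Tendsto (fun r => exp (-k * r) * f r) atTop (𝓝 0)) :
    f =O[atTop] fun r => exp (k * r) := by
  refine (((isBigO_refl (fun r => exp (k * r)) atTop).mul (hf.isBigO_one ℝ)).congr
    (fun r => ?_) fun r => mul_one _)
  rw [← mul_assoc, ← exp_add]
  simp

lemma isBigO_mul_exp_neg {δ : ℝ} (hδ : 0 < δ) :
    (fun s => s * exp (-δ * s)) =O[atTop] fun s => exp (-(δ / 2) * s) := by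
  refine ((isLittleO_pow_exp_pos_mul_atTop 1 (half_pos hδ)).isBigO.mul
    (isBigO_refl (fun s => exp (-δ * s)) atTop)).congr (fun s => by simp) fun s => ?_
  rw [← exp_add]
  ring_nf

lemma isBigO_exp_neg_mul_of_linear_le {G h : ℝ → ℝ} {β ε ε' r₀ : ℝ} (hβ : 0 ≤ β)
    (hG : ∀ s ≥ r₀, G r₀ + ε * (s - r₀) ≤ G s) (hh : h =O[atTop] fun s => s * exp (ε' * s))
    (hε' : ε' < β * ε) :
    (fun s => exp (-(β * G s)) * h s) =O[atTop] fun s => exp (-((β * ε - ε') / 2) * s) := by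
  refine ((isBigO_exp_neg_of_linear_le hβ hG).mul hh).trans
    ((isBigO_mul_exp_neg (sub_pos.2 hε')).congr_left fun s => ?_)
  rw [mul_left_comm, ← exp_add]
  ring_nf

lemma hasDerivWithinAt_exp_mul_integral_Ioi {β a : ℝ} {g h G : ℝ → ℝ}
    (hGd : ∀ r ∈ Ici a, HasDerivWithinAt G (g r) (Ici a) r)
    (hc : ContinuousOn (fun s => exp (-(β * G s)) * h s) (Ici a))
    (hci : IntegrableOn (fun s => exp (-(β * G s)) * h s) (Ioi a)) {r : ℝ} (hr : a ≤ r) :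
    HasDerivWithinAt (fun ρ => exp (β * G ρ) * ∫ s in Ioi ρ, exp (-(β * G s)) * h s)
      (β * g r * (exp (β * G r) * ∫ s in Ioi r, exp (-(β * G s)) * h s) - h r) (Ici a) r := by
  refine (((hGd r hr).const_mul β).exp.mul
    (hasDerivWithinAt_integral_Ioi hc hci hr)).congr_deriv ?_
  rw [exp_neg]
  field_simp
  ring

lemma contDiffOn_and_ode_of_integrableOn_Ioi {β : ℝ} {g h G ψ : ℝ → ℝ}
    (hgc : ContinuousOn g (Ici 0)) (hhc : ContinuousOn h (Ici 0))
    (hGd : ∀ r ∈ Ici (0:ℝ), HasDerivWithinAt G (g r) (Ici 0) r)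
    (hcc : ContinuousOn (fun s => exp (-(β * G s)) * h s) (Ici 0))
    (hci : IntegrableOn (fun s => exp (-(β * G s)) * h s) (Ioi 0))
    (hψ : ∀ r, ψ r = β * ∫ ρ in (0:ℝ)..r,
        exp (β * G ρ) * ∫ s in Ioi ρ, exp (-(β * G s)) * h s) :
    (∀ r, IntegrableOn (fun ρ => exp (β * G ρ) * ∫ s in Ioi ρ, exp (-(β * G s)) * h s)
        (Ioc 0 r)) ∧
    ContDiffOn ℝ 2 ψ (Ici 0) ∧
    ∀ r > (0:ℝ), deriv (deriv ψ) r - β * g r * deriv ψ r + β * h r = 0 := by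
  set q := fun ρ => exp (β * G ρ) * ∫ s in Ioi ρ, exp (-(β * G s)) * h s
  have hqd : ∀ r ∈ Ici (0:ℝ), HasDerivWithinAt q (β * g r * q r - h r) (Ici 0) r :=
    fun r hr => hasDerivWithinAt_exp_mul_integral_Ioi hGd hcc hci hr
  have hqc : ContinuousOn q (Ici 0) := fun r hr => (hqd r hr).continuousWithinAt
  have hψd : ∀ r ∈ Ici (0:ℝ), HasDerivWithinAt ψ (β * q r) (Ici 0) r := fun r hr => by
    simpa only [← hψ] using (hasDerivWithinAt_integral_Ici hqc hr).const_mul β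
  have hq1 : ContDiffOn ℝ 1 (fun r => β * q r) (Ici 0) := by
    simpa using contDiffOn_succ_of_hasDerivWithinAt (n := 0) (uniqueDiffOn_Ici 0)
      (fun r hr => (hqd r hr).const_mul β)
      (contDiffOn_zero.2 (continuousOn_const.mul
        (((continuousOn_const.mul hgc).mul hqc).sub hhc)))
  refine ⟨fun r => (hqc.mono Icc_subset_Ici_self).integrableOn_Icc.mono_set Ioc_subset_Icc_self,
    ?_, fun r hr => ?_⟩
  · simpa [one_add_one_eq_two] using
      contDiffOn_succ_of_hasDerivWithinAt (n := 1) (uniqueDiffOn_Ici 0) hψd hq1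
  · rw [deriv_deriv_eq_of_hasDerivWithinAt_Ici hψd ((hqd r hr.le).const_mul β) hr,
      ((hψd r hr.le).hasDerivAt (Ici_mem_nhds hr)).deriv]
    ring

/-- For d = 1, under hypotheses (H), ψ(r) = β ∫₀^r e^{βG(ρ)} (∫_ρ^∞ e^{−βG(s)} h(s) ds) dρ
is well defined, C² on [0,∞), vanishes at 0, and solves ψ″ − βgψ′ + βh = 0 on (0,∞). -/
theorem stmt12 (β ε : ℝ) (hβ : 0 < β) (hε : 0 < ε)
    (f b σ : ℝ → ℝ)
    (hfc : ContinuousOn f (Ici 0)) (hbc : ContinuousOn b (Ici 0))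
    (hσc : ContinuousOn σ (Ici 0))
    (hσε : ∀ r ∈ Ici (0:ℝ), ε ≤ σ r)
    (g h G : ℝ → ℝ)
    (hg : ∀ r, g r = 2 * r * b r / (σ r) ^ 2)
    (hh : ∀ r, h r = 2 * r * f r / (σ r) ^ 2)
    (hG : ∀ r, G r = ∫ ρ in (0:ℝ)..r, g ρ)
    (H1 : ∃ r₀ ≥ (1:ℝ), ∀ r ≥ r₀, ε ≤ g r)
    (H2 : ∃ ε' < β * ε / 2, Tendsto (fun r => Real.exp (-ε' * r) * f r) atTop (nhds 0))
    (ψ : ℝ → ℝ)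
    (hψ : ∀ r, ψ r = β * ∫ ρ in (0:ℝ)..r,
        Real.exp (β * G ρ) * ∫ s in Ioi ρ, Real.exp (-(β * G s)) * h s) :
    (∀ ρ : ℝ, 0 ≤ ρ → IntegrableOn (fun s => Real.exp (-(β * G s)) * h s) (Ioi ρ)) ∧
    (∀ r : ℝ, 0 ≤ r → IntegrableOn
        (fun ρ => Real.exp (β * G ρ) * ∫ s in Ioi ρ, Real.exp (-(β * G s)) * h s)
        (Ioc 0 r)) ∧
    ContDiffOn ℝ 2 ψ (Ici 0) ∧ ψ 0 = 0 ∧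
    (∀ r > (0:ℝ), deriv (deriv ψ) r - β * g r * deriv ψ r + β * h r = 0) := by
  obtain ⟨r₀, hr₀1, hr₀⟩ := H1
  obtain ⟨ε', hε', hf'⟩ := H2
  have hgc : ContinuousOn g (Ici 0) :=
    (continuousOn_mul_div_sq hε hbc hσc hσε).congr fun r _ => hg r
  have hhc : ContinuousOn h (Ici 0) :=
    (continuousOn_mul_div_sq hε hfc hσc hσε).congr fun r _ => hh r
  have hGd : ∀ r ∈ Ici (0:ℝ), HasDerivWithinAt G (g r) (Ici 0) r := fun r hr => by
    simpa only [← hG] using hasDerivWithinAt_integral_Ici hgc hr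
  have hGlow : ∀ s ≥ r₀, G r₀ + ε * (s - r₀) ≤ G s := fun s hs => by
    simpa only [← hG] using integral_add_mul_sub_le hgc (by linarith) hr₀ hs
  have hhO : h =O[atTop] fun s => s * exp (ε' * s) := by
    simpa only [← hh] using (isBigO_mul_div_sq hε hσε).trans
      ((isBigO_refl (fun s : ℝ => s) atTop).mul (isBigO_exp_of_tendsto_exp_neg_mul hf'))
  have hcc : ContinuousOn (fun s => exp (-(β * G s)) * h s) (Ici 0) :=
    ((continuousOn_const.mul fun r hr => (hGd r hr).continuousWithinAt).neg.rexp).mul hhc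
  have hci : ∀ ρ : ℝ, 0 ≤ ρ → IntegrableOn (fun s => exp (-(β * G s)) * h s) (Ioi ρ) :=
    fun ρ hρ => integrable_of_isBigO_exp_neg (by nlinarith) (hcc.mono (Ici_subset_Ici.2 hρ))
      (isBigO_exp_neg_mul_of_linear_le hβ.le hGlow hhO (by nlinarith))
  obtain ⟨hqi, hψC2, hode⟩ :=
    contDiffOn_and_ode_of_integrableOn_Ioi hgc hhc hGd hcc (hci 0 le_rfl) hψ
  exact ⟨hci, fun r _ => hqi r, hψC2, by simp [hψ], hode⟩
end

section
/- As β → ∞, one has J_β ∼ √(π/2) · β^{−1/2}; that is, lim_{β→∞} β^{1/2} J_β = √(π/2). Moreover, for every β > 0 the identity J_β = ∫₀^∞ e^{−u} / √(u(u+2β)) du holds. -/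
/-!
The substitution `u = β (√(1 + z²) - 1)` is a bijection of `(0, ∞)` with
`du = β z / √(1 + z²) dz` and `u (u + 2β) = (β z)²`, which turns `J_β` into
`∫₀^∞ e^{-u} / √(u (u + 2β)) du`. Multiplying by `√β` gives `∫₀^∞ e^{-u} / √(u²/β + 2u) du`,
which by dominated convergence (dominated by `e^{-u} / √(2u)`) tends to
`∫₀^∞ e^{-u} / √(2u) du = Γ(1/2) / √2 = √(π/2)`.
-/

open Filter MeasureTheory Set

namespace DunkelHanggi

noncomputable def kineticSubst (β z : ℝ) : ℝ := β * (Real.sqrt (1 + z ^ 2) - 1)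

variable {β : ℝ}

lemma hasDerivAt_kineticSubst (z : ℝ) :
    HasDerivAt (kineticSubst β) (β * (z / Real.sqrt (1 + z ^ 2))) z := by
  have hsqrt : HasDerivAt (fun z : ℝ => Real.sqrt (1 + z ^ 2)) (z / Real.sqrt (1 + z ^ 2)) z := by
    convert ((hasDerivAt_pow 2 z).const_add 1).sqrt (by positivity) using 1
    field_simp
    ring
  exact (hsqrt.sub_const 1).const_mul β

lemma strictMonoOn_kineticSubst (hβ : 0 < β) : StrictMonoOn (kineticSubst β) (Ioi 0) := by
  intro a ha b hb hab
  have : Real.sqrt (1 + a ^ 2) < Real.sqrt (1 + b ^ 2) :=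
    Real.sqrt_lt_sqrt (by positivity) (by nlinarith [mem_Ioi.mp ha])
  unfold kineticSubst
  gcongr

lemma kineticSubst_image_Ioi (hβ : 0 < β) : kineticSubst β '' Ioi 0 = Ioi 0 := by
  ext u
  constructor
  · rintro ⟨z, hz, rfl⟩
    have : 1 < Real.sqrt (1 + z ^ 2) :=
      Real.lt_sqrt_of_sq_lt (by nlinarith [mem_Ioi.mp hz])
    exact mul_pos hβ (by linarith)
  · intro hu
    have hu : 0 < u / β := div_pos hu hβ
    refine ⟨Real.sqrt ((1 + u / β) ^ 2 - 1), Real.sqrt_pos.mpr (by nlinarith), ?_⟩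
    rw [kineticSubst, Real.sq_sqrt (by nlinarith), add_sub_cancel, Real.sqrt_sq (by positivity)]
    field_simp
    ring

lemma kineticSubst_mul_add (z : ℝ) :
    kineticSubst β z * (kineticSubst β z + 2 * β) = (β * z) ^ 2 := by
  have := Real.sq_sqrt (by positivity : (0 : ℝ) ≤ 1 + z ^ 2)
  unfold kineticSubst
  linear_combination β ^ 2 * this

theorem integral_exp_div_sqrt_one_add_sq_eq (hβ : 0 < β) :
    (∫ z in Ioi (0:ℝ), Real.exp (β * (1 - Real.sqrt (1 + z ^ 2))) / Real.sqrt (1 + z ^ 2))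
      = ∫ u in Ioi (0:ℝ), Real.exp (-u) / Real.sqrt (u * (u + 2 * β)) := by
  have hsubst := integral_image_eq_integral_abs_deriv_smul measurableSet_Ioi
    (fun z _ => (hasDerivAt_kineticSubst z).hasDerivWithinAt)
    (strictMonoOn_kineticSubst hβ).injOn (fun u => Real.exp (-u) / Real.sqrt (u * (u + 2 * β)))
  rw [kineticSubst_image_Ioi hβ] at hsubst
  rw [hsubst]
  refine setIntegral_congr_fun measurableSet_Ioi fun z (hz : 0 < z) => ?_
  have hroot : 0 < Real.sqrt (1 + z ^ 2) := by positivity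
  rw [kineticSubst_mul_add, Real.sqrt_sq (by positivity), abs_of_pos (by positivity), smul_eq_mul,
    kineticSubst, neg_mul_eq_mul_neg, neg_sub]
  field_simp

lemma exp_neg_div_sqrt_mul_eq (c : ℝ) {u : ℝ} (hu : 0 < u) :
    Real.exp (-u) / Real.sqrt (c * u) = (Real.sqrt c)⁻¹ * (Real.exp (-u) * u ^ ((1:ℝ) / 2 - 1)) := by
  rw [Real.sqrt_mul' c hu.le, show (1:ℝ) / 2 - 1 = -(1 / 2) by norm_num, Real.rpow_neg hu.le,
    ← Real.sqrt_eq_rpow]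
  field_simp

lemma integrableOn_exp_neg_div_sqrt_mul (c : ℝ) :
    IntegrableOn (fun u : ℝ => Real.exp (-u) / Real.sqrt (c * u)) (Ioi 0) :=
  IntegrableOn.congr_fun ((Real.GammaIntegral_convergent one_half_pos).const_mul _)
    (fun _ hu => (exp_neg_div_sqrt_mul_eq c hu).symm) measurableSet_Ioi

lemma integral_exp_neg_div_sqrt_mul (c : ℝ) :
    ∫ u in Ioi (0:ℝ), Real.exp (-u) / Real.sqrt (c * u) = Real.sqrt (Real.pi / c) := by
  rw [setIntegral_congr_fun measurableSet_Ioi fun _ hu => exp_neg_div_sqrt_mul_eq c hu,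
    integral_const_mul, ← Real.Gamma_eq_integral one_half_pos, Real.Gamma_one_half_eq,
    Real.sqrt_div Real.pi_pos.le, inv_mul_eq_div]

lemma sqrt_mul_integral_exp_neg_div_sqrt (hβ : 0 < β) :
    Real.sqrt β * ∫ u in Ioi (0:ℝ), Real.exp (-u) / Real.sqrt (u * (u + 2 * β))
      = ∫ u in Ioi (0:ℝ), Real.exp (-u) / Real.sqrt (u ^ 2 / β + 2 * u) := by
  rw [← integral_const_mul]
  refine setIntegral_congr_fun measurableSet_Ioi fun u (hu : 0 < u) => ?_
  have hrescale : u * (u + 2 * β) = β * (u ^ 2 / β + 2 * u) := by field_simp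
  have hroot : 0 < Real.sqrt (u ^ 2 / β + 2 * u) := by positivity
  have hβroot : 0 < Real.sqrt β := by positivity
  rw [hrescale, Real.sqrt_mul hβ.le]
  field_simp

lemma tendsto_integral_exp_neg_div_sqrt :
    Tendsto (fun β : ℝ => ∫ u in Ioi (0:ℝ), Real.exp (-u) / Real.sqrt (u ^ 2 / β + 2 * u))
      atTop (nhds (Real.sqrt (Real.pi / 2))) := by
  rw [← integral_exp_neg_div_sqrt_mul]
  refine tendsto_integral_filter_of_dominated_convergence _
    (Eventually.of_forall fun _ => (by fun_prop : Measurable _).aestronglyMeasurable) ?_ (integrableOn_exp_neg_div_sqrt_mul 2) ?_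
  · filter_upwards [eventually_gt_atTop 0] with β hβ
    refine (ae_restrict_iff' measurableSet_Ioi).mpr (Eventually.of_forall fun u (hu : 0 < u) => ?_)
    rw [Real.norm_of_nonneg (by positivity)]
    gcongr
    exact le_add_of_nonneg_left (by positivity)
  · refine (ae_restrict_iff' measurableSet_Ioi).mpr (Eventually.of_forall fun u (hu : 0 < u) => ?_)
    have hquad : Tendsto (fun β : ℝ => u ^ 2 / β + 2 * u) atTop (nhds (2 * u)) := by
      simpa using (tendsto_const_nhds.div_atTop tendsto_id).add_const (2 * u)
    exact tendsto_const_nhds.div hquad.sqrt (by positivity)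

end DunkelHanggi

open DunkelHanggi in
/-- For every β > 0, J_β = ∫₀^∞ e^{−u}/√(u(u+2β)) du, and β^{1/2} J_β → √(π/2) as β → ∞. -/
theorem stmt13 :
    (∀ β > (0:ℝ),
      (∫ z in Ioi (0:ℝ), Real.exp (β * (1 - Real.sqrt (1 + z ^ 2))) / Real.sqrt (1 + z ^ 2))
        = ∫ u in Ioi (0:ℝ), Real.exp (-u) / Real.sqrt (u * (u + 2 * β))) ∧
    Tendsto (fun β : ℝ => Real.sqrt β *
        ∫ z in Ioi (0:ℝ), Real.exp (β * (1 - Real.sqrt (1 + z ^ 2))) / Real.sqrt (1 + z ^ 2))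
      atTop (nhds (Real.sqrt (Real.pi / 2))) := by
  refine ⟨fun β hβ => integral_exp_div_sqrt_one_add_sq_eq hβ, ?_⟩
  refine tendsto_integral_exp_neg_div_sqrt.congr' ?_
  filter_upwards [eventually_gt_atTop 0] with β hβ
  rw [integral_exp_div_sqrt_one_add_sq_eq hβ, sqrt_mul_integral_exp_neg_div_sqrt hβ]
end

section
/- As β → 0⁺, one has J_β ∼ log(1/β); that is, lim_{β→0⁺} J_β / log(1/β) = 1. -/
/-!
Write `⟨z⟩ = √(1 + z²)`, so that `⟨z⟩⁻¹` is the derivative of `arsinh`. Since `⟨z⟩ ≥ 1` and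
`e^x ≥ 1 + x`, the integrand lies between `⟨z⟩⁻¹ - β` and `⟨z⟩⁻¹`; beyond `z = 1/β` it is also at
most `β e^{β(1 - z)}`, whose integral there is `e^{β - 1} ≤ 1`. Cutting at `1/β` therefore gives
`|J_β - arsinh (1/β)| ≤ 1` for `0 < β ≤ 1`, and `arsinh x = log x + O(1)` as `x → ∞`.
-/

open Filter MeasureTheory Set Real Topology Asymptotics

lemma one_le_sqrt_one_add_sq (z : ℝ) : 1 ≤ √(1 + z ^ 2) :=
  Real.one_le_sqrt.2 (by nlinarith)

lemma sqrt_one_add_sq_pos (z : ℝ) : 0 < √(1 + z ^ 2) :=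
  one_pos.trans_le (one_le_sqrt_one_add_sq z)

lemma le_sqrt_one_add_sq (z : ℝ) : z ≤ √(1 + z ^ 2) :=
  (le_abs_self z).trans (Real.abs_le_sqrt (by linarith))

lemma continuous_inv_sqrt_one_add_sq : Continuous fun z : ℝ => (√(1 + z ^ 2))⁻¹ :=
  (by fun_prop : Continuous fun z : ℝ => √(1 + z ^ 2)).inv₀ fun z => (sqrt_one_add_sq_pos z).ne'

lemma integral_inv_sqrt_one_add_sq (a b : ℝ) :
    ∫ z in a..b, (√(1 + z ^ 2))⁻¹ = arsinh b - arsinh a :=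
  intervalIntegral.integral_eq_sub_of_hasDerivAt (fun x _ => hasDerivAt_arsinh x)
    (continuous_inv_sqrt_one_add_sq.intervalIntegrable a b)

lemma log_le_arsinh {x : ℝ} (hx : 0 < x) : log x ≤ arsinh x :=
  Real.log_le_log hx (by nlinarith [Real.sqrt_nonneg (1 + x ^ 2)])

lemma arsinh_le_log_add_log_three {x : ℝ} (hx : 1 ≤ x) : arsinh x ≤ log x + log 3 := by
  rw [arsinh, ← Real.log_mul (by linarith) (by norm_num)]
  have : √(1 + x ^ 2) ≤ 2 * x := Real.sqrt_le_iff.2 ⟨by linarith, by nlinarith⟩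
  exact Real.log_le_log (by positivity) (by linarith)

lemma tendsto_div_nhds_one_of_abs_sub_le {α : Type*} {l : Filter α} {f g : α → ℝ} {C : ℝ}
    (hg : Tendsto g l atTop) (hfg : ∀ᶠ x in l, |f x - g x| ≤ C) :
    Tendsto (fun x => f x / g x) l (𝓝 1) := by
  have hbdd : (f - g) =O[l] fun _ => (1 : ℝ) :=
    IsBigO.of_bound C (hfg.mono fun x hx => by simpa using hx)
  have hsmall : (fun _ => (1 : ℝ)) =o[l] g :=
    (isLittleO_one_left_iff ℝ).2 (tendsto_norm_atTop_atTop.comp hg)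
  exact (isEquivalent_iff_tendsto_one (hg.eventually_ne_atTop 0)).1 (hbdd.trans_isLittleO hsmall)

noncomputable def relKernel (β z : ℝ) : ℝ :=
  exp (β * (1 - √(1 + z ^ 2))) / √(1 + z ^ 2)

namespace relKernel

variable {β : ℝ}

lemma continuous (β : ℝ) : Continuous (relKernel β) :=
  (by fun_prop : Continuous fun z => exp (β * (1 - √(1 + z ^ 2)))).div (by fun_prop)
    fun z => (sqrt_one_add_sq_pos z).ne'

lemma nonneg (β z : ℝ) : 0 ≤ relKernel β z := by
  unfold relKernel; positivity

lemma le_inv_sqrt (hβ : 0 ≤ β) (z : ℝ) : relKernel β z ≤ (√(1 + z ^ 2))⁻¹ := by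
  rw [relKernel, div_eq_mul_inv]
  refine mul_le_of_le_one_left (inv_nonneg.2 (Real.sqrt_nonneg _)) (exp_le_one_iff.2 ?_)
  nlinarith [one_le_sqrt_one_add_sq z]

lemma inv_sqrt_sub_le (hβ : 0 ≤ β) (z : ℝ) : (√(1 + z ^ 2))⁻¹ - β ≤ relKernel β z := by
  have hs := sqrt_one_add_sq_pos z
  rw [relKernel, le_div_iff₀ hs, sub_mul, inv_mul_cancel₀ hs.ne']
  linarith [add_one_le_exp (β * (1 - √(1 + z ^ 2)))]

lemma le_exp (hβ : 0 ≤ β) (z : ℝ) : relKernel β z ≤ exp β * exp (-β * z) := by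
  rw [relKernel, ← exp_add]
  refine (div_le_self (exp_pos _).le (one_le_sqrt_one_add_sq z)).trans (exp_le_exp.2 ?_)
  nlinarith [le_sqrt_one_add_sq z]

lemma le_mul_exp (hβ : 0 < β) {z : ℝ} (hz : β⁻¹ ≤ z) :
    relKernel β z ≤ β * (exp β * exp (-β * z)) := by
  have hinv : (√(1 + z ^ 2))⁻¹ ≤ β :=
    (inv_le_comm₀ (sqrt_one_add_sq_pos z) hβ).2 (hz.trans (le_sqrt_one_add_sq z))
  have hexp : exp (β * (1 - √(1 + z ^ 2))) ≤ exp β * exp (-β * z) := by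
    rw [← exp_add]; exact exp_le_exp.2 (by nlinarith [le_sqrt_one_add_sq z])
  calc relKernel β z = exp (β * (1 - √(1 + z ^ 2))) * (√(1 + z ^ 2))⁻¹ := div_eq_mul_inv _ _
    _ ≤ (exp β * exp (-β * z)) * β := mul_le_mul hexp hinv (by positivity) (by positivity)
    _ = β * (exp β * exp (-β * z)) := mul_comm _ _

lemma integrableOn_Ioi (hβ : 0 < β) : IntegrableOn (relKernel β) (Ioi 0) := by
  refine ((exp_neg_integrableOn_Ioi 0 hβ).const_mul (exp β)).mono'
    (relKernel.continuous β).aestronglyMeasurable.restrict (Eventually.of_forall fun z => ?_)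
  rw [Real.norm_of_nonneg (nonneg β z)]
  exact le_exp hβ.le z

lemma integral_Ioi_inv_le (hβ : 0 < β) : ∫ z in Ioi β⁻¹, relKernel β z ≤ exp (β - 1) := by
  have hint : IntegrableOn (fun z => β * (exp β * exp (-β * z))) (Ioi β⁻¹) :=
    ((exp_neg_integrableOn_Ioi _ hβ).const_mul _).const_mul _
  calc ∫ z in Ioi β⁻¹, relKernel β z
      ≤ ∫ z in Ioi β⁻¹, β * (exp β * exp (-β * z)) :=
        setIntegral_mono_on ((integrableOn_Ioi hβ).mono_set (Ioi_subset_Ioi (by positivity)))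
          hint measurableSet_Ioi fun z hz => le_mul_exp hβ (le_of_lt hz)
    _ = exp (β - 1) := by
        rw [integral_const_mul, integral_const_mul, integral_exp_mul_Ioi (by linarith),
          show -β * β⁻¹ = -1 by field_simp, sub_eq_add_neg, exp_add]
        field_simp

lemma arsinh_sub_le_integral (hβ : 0 < β) {T : ℝ} (hT : 0 ≤ T) :
    arsinh T - β * T ≤ ∫ z in Ioi 0, relKernel β z := by
  have hinv := continuous_inv_sqrt_one_add_sq.intervalIntegrable (μ := volume) 0 T
  calc arsinh T - β * T = ∫ z in (0)..T, ((√(1 + z ^ 2))⁻¹ - β) := by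
        rw [intervalIntegral.integral_sub hinv intervalIntegrable_const,
          integral_inv_sqrt_one_add_sq, intervalIntegral.integral_const, arsinh_zero]
        simp [mul_comm]
    _ ≤ ∫ z in (0)..T, relKernel β z :=
        intervalIntegral.integral_mono hT (hinv.sub intervalIntegrable_const)
          ((relKernel.continuous β).intervalIntegrable 0 T) (inv_sqrt_sub_le hβ.le)
    _ = ∫ z in Ioc 0 T, relKernel β z := intervalIntegral.integral_of_le hT
    _ ≤ ∫ z in Ioi 0, relKernel β z :=
        setIntegral_mono_set (integrableOn_Ioi hβ) (Eventually.of_forall (nonneg β))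
          Ioc_subset_Ioi_self.eventuallyLE

lemma integral_le_arsinh_inv_add_one (hβ : 0 < β) (hβ1 : β ≤ 1) :
    ∫ z in Ioi 0, relKernel β z ≤ arsinh β⁻¹ + 1 := by
  have hT : 0 ≤ β⁻¹ := inv_nonneg.2 hβ.le
  have hint := integrableOn_Ioi hβ
  have hhead : ∫ z in Ioc 0 β⁻¹, relKernel β z ≤ arsinh β⁻¹ := by
    rw [← intervalIntegral.integral_of_le hT]
    calc ∫ z in (0)..β⁻¹, relKernel β z ≤ ∫ z in (0)..β⁻¹, (√(1 + z ^ 2))⁻¹ :=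
          intervalIntegral.integral_mono hT ((relKernel.continuous β).intervalIntegrable _ _)
            (continuous_inv_sqrt_one_add_sq.intervalIntegrable _ _) (le_inv_sqrt hβ.le)
      _ = arsinh β⁻¹ := by rw [integral_inv_sqrt_one_add_sq, arsinh_zero, sub_zero]
  have htail : ∫ z in Ioi β⁻¹, relKernel β z ≤ 1 :=
    (integral_Ioi_inv_le hβ).trans (exp_le_one_iff.2 (by linarith))
  rw [← Ioc_union_Ioi_eq_Ioi hT, setIntegral_union (Ioc_disjoint_Ioi le_rfl) measurableSet_Ioi
    (hint.mono_set Ioc_subset_Ioi_self) (hint.mono_set (Ioi_subset_Ioi hT))]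
  linarith

lemma abs_integral_sub_log_inv_le (hβ : 0 < β) (hβ1 : β ≤ 1) :
    |(∫ z in Ioi 0, relKernel β z) - log β⁻¹| ≤ log 3 + 1 := by
  have hlower := arsinh_sub_le_integral hβ (inv_nonneg.2 hβ.le)
  rw [mul_inv_cancel₀ hβ.ne'] at hlower
  have hupper := integral_le_arsinh_inv_add_one hβ hβ1
  have hlog_le := log_le_arsinh (inv_pos.2 hβ)
  have hle_log := arsinh_le_log_add_log_three (one_le_inv_iff₀.2 ⟨hβ, hβ1⟩)
  have hlog3 : 0 < log 3 := log_pos (by norm_num)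
  rw [abs_le]
  constructor <;> linarith

end relKernel

/-- As β → 0⁺, J_β ∼ log(1/β), i.e. J_β / log(1/β) → 1. -/
theorem stmt14 :
    Tendsto (fun β : ℝ =>
        (∫ z in Ioi (0:ℝ), Real.exp (β * (1 - Real.sqrt (1 + z ^ 2))) / Real.sqrt (1 + z ^ 2))
          / Real.log (1 / β))
      (nhdsWithin 0 (Ioi 0)) (nhds 1) := by
  have hlog : Tendsto (fun β : ℝ => log (1 / β)) (𝓝[>] 0) atTop := by
    simp_rw [one_div]
    exact tendsto_log_atTop.comp tendsto_inv_nhdsGT_zero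
  refine tendsto_div_nhds_one_of_abs_sub_le hlog (C := log 3 + 1) ?_
  filter_upwards [Ioc_mem_nhdsGT one_pos] with β ⟨hβ, hβ1⟩
  rw [one_div]
  exact relKernel.abs_integral_sub_log_inv_le hβ hβ1
end

section
/- As β → ∞, one has K_β ∼ √(2π) · β^{−3/2}; that is, lim_{β→∞} β^{3/2} K_β = √(2π). -/
/-!
Write `E(y) = √(1 + y²)`, so `E' = y / E`, and `φ_β = y e^{β(1-E)} / E²` for the inner integrand.
With `u_β = e^{β(1-E)} / (βE)`, the functions `-u_β` and `-u_β (1 - 1/(βE))` have derivatives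
`φ_β (1 + 1/(βE))` and `φ_β (1 - 2/(βE)²)`, which bracket `φ_β` on `[0, ∞)` once `β² ≥ 2`;
integrating over `(x, ∞)` gives `(1 - 1/β) u_β ≤ I_β ≤ u_β` for `x ≥ 0`, `β ≥ 2`. Since
`β² u_β² e^{β(E-1)} = w_β := e^{β(1-E)} / (1 + x²)`, this squeezes `β^{3/2} K_β` between
`(1 - 1/β)²` and `1` times `2√β ∫₀^∞ w_β`. Finally `√β ∫₀^∞ w_β(x) dx = ∫₀^∞ w_β(v/√β) dv`, and
`w_β(v/√β) → e^{-v²/2}` under the domination `e^{2-v}`, so `2√β ∫₀^∞ w_β → √(2π)`.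
-/

open Filter MeasureTheory Set Real Topology

section TailComparison

variable {f F F' : ℝ → ℝ} {a l : ℝ}

theorem integral_Ioi_le_of_le_deriv (hderiv : ∀ x ∈ Ici a, HasDerivAt F (F' x) x)
    (hf : ∀ x ∈ Ioi a, 0 ≤ f x) (hfF : ∀ x ∈ Ioi a, f x ≤ F' x) (hF : Tendsto F atTop (𝓝 l)) :
    ∫ x in Ioi a, f x ≤ l - F a := by
  have hF' : ∀ x ∈ Ioi a, 0 ≤ F' x := fun x hx => (hf x hx).trans (hfF x hx)
  rw [← integral_Ioi_of_hasDerivAt_of_nonneg' hderiv hF' hF]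
  exact integral_mono_of_nonneg ((ae_restrict_iff' measurableSet_Ioi).2 (ae_of_all _ hf))
    (integrableOn_Ioi_deriv_of_nonneg' hderiv hF' hF)
    ((ae_restrict_iff' measurableSet_Ioi).2 (ae_of_all _ hfF))

theorem integrableOn_Ioi_of_le_deriv (hfm : AEStronglyMeasurable f (volume.restrict (Ioi a)))
    (hderiv : ∀ x ∈ Ici a, HasDerivAt F (F' x) x)
    (hf : ∀ x ∈ Ioi a, 0 ≤ f x) (hfF : ∀ x ∈ Ioi a, f x ≤ F' x) (hF : Tendsto F atTop (𝓝 l)) :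
    IntegrableOn f (Ioi a) := by
  refine Integrable.mono' (integrableOn_Ioi_deriv_of_nonneg' hderiv
    (fun x hx => (hf x hx).trans (hfF x hx)) hF) hfm ?_
  filter_upwards [ae_restrict_mem measurableSet_Ioi] with x hx
  rw [norm_of_nonneg (hf x hx)]
  exact hfF x hx

theorem le_integral_Ioi_of_deriv_le (hderiv : ∀ x ∈ Ici a, HasDerivAt F (F' x) x)
    (hF' : ∀ x ∈ Ioi a, 0 ≤ F' x) (hF'f : ∀ x ∈ Ioi a, F' x ≤ f x)
    (hfi : IntegrableOn f (Ioi a)) (hF : Tendsto F atTop (𝓝 l)) :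
    l - F a ≤ ∫ x in Ioi a, f x := by
  rw [← integral_Ioi_of_hasDerivAt_of_nonneg' hderiv hF' hF]
  exact integral_mono_of_nonneg ((ae_restrict_iff' measurableSet_Ioi).2 (ae_of_all _ hF'))
    hfi ((ae_restrict_iff' measurableSet_Ioi).2 (ae_of_all _ hF'f))

end TailComparison

theorem one_sub_sqrt_one_add {t : ℝ} (ht : -1 ≤ t) : 1 - √(1 + t) = -(t / (1 + √(1 + t))) := by
  have h := sq_sqrt (by linarith : 0 ≤ 1 + t)
  have h0 := sqrt_nonneg (1 + t)
  field_simp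
  nlinarith

namespace DunkelHanggi

noncomputable def energy (p : ℝ) : ℝ := √(1 + p ^ 2)

noncomputable def tailDensity (β y : ℝ) : ℝ := y * exp (β * (1 - energy y)) / (1 + y ^ 2)

noncomputable def tailIntegral (β x : ℝ) : ℝ := ∫ y in Ioi x, tailDensity β y

noncomputable def tailApprox (β x : ℝ) : ℝ := exp (β * (1 - energy x)) / (β * energy x)

noncomputable def weight (β x : ℝ) : ℝ := exp (β * (1 - energy x)) / (1 + x ^ 2)

noncomputable def varianceNumerator (β : ℝ) : ℝ :=
  2 * β * ∫ x in Ioi (0 : ℝ), tailIntegral β x ^ 2 * exp (β * (energy x - 1))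

theorem energy_sq (p : ℝ) : energy p ^ 2 = 1 + p ^ 2 := sq_sqrt (by positivity)

theorem one_le_energy (p : ℝ) : 1 ≤ energy p :=
  one_le_sqrt.2 (by nlinarith)

theorem energy_pos (p : ℝ) : 0 < energy p := one_pos.trans_le (one_le_energy p)

theorem le_energy (p : ℝ) : p ≤ energy p :=
  le_sqrt_of_sq_le (by nlinarith)

@[fun_prop]
theorem continuous_energy : Continuous energy := by
  unfold energy; fun_prop

theorem tendsto_energy_atTop : Tendsto energy atTop atTop :=
  tendsto_atTop_mono le_energy tendsto_id

theorem hasDerivAt_energy (p : ℝ) : HasDerivAt energy (p / energy p) p := by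
  refine (((hasDerivAt_pow 2 p).const_add 1).sqrt (by positivity)).congr_deriv ?_
  simp only [energy]
  field_simp
  norm_num

theorem continuous_tailDensity (β : ℝ) : Continuous (tailDensity β) := by
  unfold tailDensity
  fun_prop (disch := exact fun y => by positivity)

theorem tailDensity_nonneg (β : ℝ) {y : ℝ} (hy : 0 ≤ y) : 0 ≤ tailDensity β y := by
  unfold tailDensity; positivity

theorem continuous_weight (β : ℝ) : Continuous (weight β) := by
  unfold weight
  fun_prop (disch := exact fun y => by positivity)

section TailBounds

variable {β : ℝ}

theorem hasDerivAt_neg_tailApprox (hβ : β ≠ 0) (y : ℝ) :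
    HasDerivAt (fun y => -tailApprox β y) (tailDensity β y * (1 + (β * energy y)⁻¹)) y := by
  have hs := (energy_pos y).ne'
  refine ((((hasDerivAt_energy y).const_sub 1).const_mul β).exp.div
    ((hasDerivAt_energy y).const_mul β) (mul_ne_zero hβ hs)).neg.congr_deriv ?_
  rw [tailDensity, ← energy_sq]
  field_simp
  ring

theorem hasDerivAt_neg_tailApprox_mul (hβ : β ≠ 0) (y : ℝ) :
    HasDerivAt (fun y => -tailApprox β y * (1 - (β * energy y)⁻¹))
      (tailDensity β y * (1 - 2 / (β * energy y) ^ 2)) y := by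
  have hs := (energy_pos y).ne'
  refine ((hasDerivAt_neg_tailApprox hβ y).mul (HasDerivAt.const_sub 1
    (((hasDerivAt_energy y).const_mul β).inv (mul_ne_zero hβ hs)))).congr_deriv ?_
  rw [tailDensity, tailApprox, Pi.inv_apply, ← energy_sq]
  field_simp
  ring

theorem tendsto_tailApprox (hβ : 0 < β) : Tendsto (tailApprox β) atTop (𝓝 0) := by
  have hexp : Tendsto (fun y => exp (β * (1 - energy y))) atTop (𝓝 0) := by
    refine tendsto_exp_atBot.comp (Tendsto.const_mul_atBot hβ ?_)
    exact tendsto_atBot_add_const_left _ 1 (tendsto_neg_atTop_atBot.comp tendsto_energy_atTop)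
  have hinv : Tendsto (fun y => (β * energy y)⁻¹) atTop (𝓝 0) :=
    (tendsto_energy_atTop.const_mul_atTop hβ).inv_tendsto_atTop
  rw [← zero_mul 0]
  exact (hexp.mul hinv).congr fun y => (div_eq_mul_inv _ _).symm

theorem tailDensity_le_mul_one_add_inv (hβ : 0 < β) {y : ℝ} (hy : 0 ≤ y) :
    tailDensity β y ≤ tailDensity β y * (1 + (β * energy y)⁻¹) :=
  le_mul_of_one_le_right (tailDensity_nonneg β hy)
    (le_add_of_nonneg_right (by have := energy_pos y; positivity))

theorem tailIntegral_le_tailApprox (hβ : 0 < β) {x : ℝ} (hx : 0 ≤ x) :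
    tailIntegral β x ≤ tailApprox β x := by
  have h := integral_Ioi_le_of_le_deriv (fun y _ => hasDerivAt_neg_tailApprox hβ.ne' y)
    (fun _ hy => tailDensity_nonneg β (hx.trans hy.out.le))
    (fun _ hy => tailDensity_le_mul_one_add_inv hβ (hx.trans hy.out.le))
    (tendsto_tailApprox hβ).neg
  simpa [tailIntegral] using h

theorem integrableOn_tailDensity (hβ : 0 < β) {x : ℝ} (hx : 0 ≤ x) :
    IntegrableOn (tailDensity β) (Ioi x) :=
  integrableOn_Ioi_of_le_deriv (continuous_tailDensity β).aestronglyMeasurable.restrict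
    (fun y _ => hasDerivAt_neg_tailApprox hβ.ne' y)
    (fun _ hy => tailDensity_nonneg β (hx.trans hy.out.le))
    (fun _ hy => tailDensity_le_mul_one_add_inv hβ (hx.trans hy.out.le))
    (tendsto_tailApprox hβ).neg

theorem tailApprox_mul_le_tailIntegral (hβ : 0 < β) (hβ2 : 2 ≤ β ^ 2) {x : ℝ} (hx : 0 ≤ x) :
    tailApprox β x * (1 - (β * energy x)⁻¹) ≤ tailIntegral β x := by
  have hcorr : ∀ y, 0 ≤ 1 - 2 / (β * energy y) ^ 2 := fun y => by
    rw [sub_nonneg, div_le_one (by have := energy_pos y; positivity), mul_pow, energy_sq]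
    nlinarith [mul_nonneg (sq_nonneg β) (sq_nonneg y)]
  have hinv : Tendsto (fun y => (β * energy y)⁻¹) atTop (𝓝 0) :=
    (tendsto_energy_atTop.const_mul_atTop hβ).inv_tendsto_atTop
  have h := le_integral_Ioi_of_deriv_le (fun y _ => hasDerivAt_neg_tailApprox_mul hβ.ne' y)
    (fun y hy => mul_nonneg (tailDensity_nonneg β (hx.trans hy.out.le)) (hcorr y))
    (fun _ hy => mul_le_of_le_one_right (tailDensity_nonneg β (hx.trans hy.out.le))
      (sub_le_self _ (by positivity)))
    (integrableOn_tailDensity hβ hx) ((tendsto_tailApprox hβ).neg.mul (hinv.const_sub 1))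
  simpa [tailIntegral] using h

theorem continuousOn_tailIntegral (hβ : 0 < β) : ContinuousOn (tailIntegral β) (Ici 0) :=
  (integrableOn_tailDensity hβ le_rfl).continuousOn_Ici_primitive_Ioi

theorem sq_mul_sq_tailApprox_mul_exp (hβ : β ≠ 0) (x : ℝ) :
    β ^ 2 * (tailApprox β x ^ 2 * exp (β * (energy x - 1))) = weight β x := by
  have he : exp (β * (1 - energy x)) * exp (β * (energy x - 1)) = 1 := by
    rw [← exp_add, ← exp_zero]; ring_nf
  have hs := (energy_pos x).ne'
  rw [tailApprox, weight, ← energy_sq]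
  field_simp
  linear_combination he

theorem tailIntegral_nonneg (β : ℝ) {x : ℝ} (hx : 0 ≤ x) : 0 ≤ tailIntegral β x :=
  setIntegral_nonneg measurableSet_Ioi fun _ hy => tailDensity_nonneg β (hx.trans hy.out.le)

theorem sq_mul_tailIntegral_sq_mul_exp_le_weight (hβ : 0 < β) {x : ℝ} (hx : 0 ≤ x) :
    β ^ 2 * (tailIntegral β x ^ 2 * exp (β * (energy x - 1))) ≤ weight β x := by
  rw [← sq_mul_sq_tailApprox_mul_exp hβ.ne']
  have := tailIntegral_nonneg β hx
  gcongr
  exact tailIntegral_le_tailApprox hβ hx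

theorem one_sub_inv_sq_mul_weight_le (hβ : 2 ≤ β) {x : ℝ} (hx : 0 ≤ x) :
    (1 - β⁻¹) ^ 2 * weight β x ≤ β ^ 2 * (tailIntegral β x ^ 2 * exp (β * (energy x - 1))) := by
  have hβ0 : 0 < β := by linarith
  have hu0 : 0 ≤ tailApprox β x := by have := energy_pos x; unfold tailApprox; positivity
  have hlow : (1 - β⁻¹) * tailApprox β x ≤ tailIntegral β x := by
    refine le_trans ?_ (tailApprox_mul_le_tailIntegral hβ0 (by nlinarith) hx)
    rw [mul_comm]
    gcongr
    exact le_mul_of_one_le_right hβ0.le (one_le_energy x)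
  have hc : 0 ≤ (1 - β⁻¹) * tailApprox β x :=
    mul_nonneg (sub_nonneg.2 (inv_le_one_of_one_le₀ (by linarith))) hu0
  calc (1 - β⁻¹) ^ 2 * weight β x
      = β ^ 2 * (((1 - β⁻¹) * tailApprox β x) ^ 2 * exp (β * (energy x - 1))) := by
        rw [← sq_mul_sq_tailApprox_mul_exp hβ0.ne']; ring
    _ ≤ β ^ 2 * (tailIntegral β x ^ 2 * exp (β * (energy x - 1))) := by gcongr

end TailBounds

theorem integrable_weight {β : ℝ} (hβ : 0 ≤ β) : Integrable (weight β) := by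
  refine integrable_inv_one_add_sq.mono' (continuous_weight β).aestronglyMeasurable
    (ae_of_all _ fun x => ?_)
  have he : exp (β * (1 - energy x)) ≤ 1 :=
    exp_le_one_iff.2 (mul_nonpos_of_nonneg_of_nonpos hβ (by linarith [one_le_energy x]))
  rw [weight, norm_of_nonneg (by positivity), div_eq_mul_inv]
  exact mul_le_of_le_one_left (by positivity) he

theorem sq_mul_integral_tailIntegral_sq_mul_exp_mem_Icc {β : ℝ} (hβ : 2 ≤ β) :
    β ^ 2 * ∫ x in Ioi 0, tailIntegral β x ^ 2 * exp (β * (energy x - 1)) ∈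
      Icc ((1 - β⁻¹) ^ 2 * ∫ x in Ioi 0, weight β x) (∫ x in Ioi 0, weight β x) := by
  have hβ0 : 0 < β := by linarith
  have hw := (integrable_weight hβ0.le).integrableOn (s := Ioi 0)
  have hmeas : AEStronglyMeasurable
      (fun x => β ^ 2 * (tailIntegral β x ^ 2 * exp (β * (energy x - 1))))
      (volume.restrict (Ioi 0)) := by
    have hI := (continuousOn_tailIntegral hβ0).mono Ioi_subset_Ici_self
    refine ContinuousOn.aestronglyMeasurable ?_ measurableSet_Ioi
    fun_prop
  have hK : IntegrableOn (fun x => β ^ 2 * (tailIntegral β x ^ 2 * exp (β * (energy x - 1))))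
      (Ioi 0) := by
    refine hw.mono' hmeas ?_
    filter_upwards [ae_restrict_mem measurableSet_Ioi] with x hx
    rw [norm_of_nonneg (by positivity)]
    exact sq_mul_tailIntegral_sq_mul_exp_le_weight hβ0 hx.out.le
  rw [← integral_const_mul, ← integral_const_mul]
  exact ⟨setIntegral_mono_on (hw.const_mul _) hK measurableSet_Ioi
      fun x hx => one_sub_inv_sq_mul_weight_le hβ hx.out.le,
    setIntegral_mono_on hK hw measurableSet_Ioi
      fun x hx => sq_mul_tailIntegral_sq_mul_exp_le_weight hβ0 hx.out.le⟩

section Rescaling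

variable {β : ℝ}

-- The rationalised exponent depends continuously on `v² / β`, also at `v² / β = 0`.
theorem weight_inv_sqrt_mul (hβ : 0 < β) (v : ℝ) :
    weight β ((√β)⁻¹ * v) = exp (-(v ^ 2 / (1 + √(1 + v ^ 2 / β)))) / (1 + v ^ 2 / β) := by
  have hx : ((√β)⁻¹ * v) ^ 2 = v ^ 2 / β := by
    rw [mul_pow, inv_pow, sq_sqrt hβ.le]; ring
  rw [weight, energy, hx, one_sub_sqrt_one_add (by linarith [show 0 ≤ v ^ 2 / β by positivity])]
  field_simp

theorem sqrt_mul_integral_weight (hβ : 0 < β) :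
    √β * ∫ x in Ioi 0, weight β x = ∫ v in Ioi 0, weight β ((√β)⁻¹ * v) := by
  rw [integral_comp_mul_left_Ioi _ _ (inv_pos.2 (sqrt_pos.2 hβ))]
  simp

theorem tendsto_weight_inv_sqrt_mul (v : ℝ) :
    Tendsto (fun β => weight β ((√β)⁻¹ * v)) atTop (𝓝 (exp (-(v ^ 2 / 2)))) := by
  have ht : Tendsto (fun β : ℝ => v ^ 2 / β) atTop (𝓝 0) :=
    tendsto_const_nhds.div_atTop tendsto_id
  have hcont : ContinuousAt (fun t => exp (-(v ^ 2 / (1 + √(1 + t)))) / (1 + t)) 0 := by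
    fun_prop (disch := norm_num)
  have hlim := hcont.tendsto.comp ht
  rw [add_zero, sqrt_one, div_one, one_add_one_eq_two] at hlim
  exact hlim.congr' (by
    filter_upwards [eventually_gt_atTop 0] with β hβ using (weight_inv_sqrt_mul hβ v).symm)

theorem weight_inv_sqrt_mul_le (hβ : 1 ≤ β) {v : ℝ} (hv : 0 ≤ v) :
    weight β ((√β)⁻¹ * v) ≤ exp (2 - v) := by
  have hβ0 : 0 < β := by linarith
  have hq : 0 ≤ v ^ 2 / β := by positivity
  have hr : √(1 + v ^ 2 / β) ≤ 1 + v := by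
    rw [sqrt_le_left (by linarith)]
    have : v ^ 2 / β ≤ v ^ 2 := div_le_self (sq_nonneg v) hβ
    nlinarith
  have hr0 := sqrt_nonneg (1 + v ^ 2 / β)
  rw [weight_inv_sqrt_mul hβ0]
  refine (div_le_self (exp_nonneg _) (by linarith)).trans (exp_le_exp.2 ?_)
  rw [neg_le, neg_sub, le_div_iff₀ (by linarith)]
  nlinarith

theorem tendsto_two_mul_sqrt_mul_integral_weight :
    Tendsto (fun β => 2 * (√β * ∫ x in Ioi 0, weight β x)) atTop (𝓝 (√(2 * π))) := by
  have hdom : IntegrableOn (fun v => exp (2 - v)) (Ioi 0) :=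
    IntegrableOn.congr_fun ((exp_neg_integrableOn_Ioi 0 one_pos).const_mul (exp 2))
      (fun v _ => by rw [← exp_add]; ring_nf) measurableSet_Ioi
  have hDCT : Tendsto (fun β => ∫ v in Ioi 0, weight β ((√β)⁻¹ * v)) atTop
      (𝓝 (∫ v in Ioi 0, exp (-(v ^ 2 / 2)))) :=
    tendsto_integral_filter_of_dominated_convergence _
      (Eventually.of_forall fun β =>
        ((continuous_weight β).comp (continuous_const_mul _)).aestronglyMeasurable)
      (by
        filter_upwards [eventually_ge_atTop 1] with β hβ
        filter_upwards [ae_restrict_mem measurableSet_Ioi] with v hv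
        rw [norm_of_nonneg (by unfold weight; positivity)]
        exact weight_inv_sqrt_mul_le hβ hv.out.le)
      hdom (ae_of_all _ tendsto_weight_inv_sqrt_mul)
  have hgauss : ∫ v in Ioi 0, exp (-(v ^ 2 / 2)) = √(2 * π) / 2 := by
    have h := integral_gaussian_Ioi (1 / 2)
    rw [show π / (1 / 2) = 2 * π by ring] at h
    rw [← h]
    congr 1 with v
    ring_nf
  have h2 := hDCT.const_mul 2
  rw [hgauss, mul_div_cancel₀ _ two_ne_zero] at h2
  refine h2.congr' ?_
  filter_upwards [eventually_gt_atTop 0] with β hβ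
  rw [sqrt_mul_integral_weight hβ]

end Rescaling

theorem rpow_mul_varianceNumerator_mem_Icc {β : ℝ} (hβ : 2 ≤ β) :
    β ^ ((3 : ℝ) / 2) * varianceNumerator β ∈
      Icc ((1 - β⁻¹) ^ 2 * (2 * (√β * ∫ x in Ioi 0, weight β x)))
        (2 * (√β * ∫ x in Ioi 0, weight β x)) := by
  have hβ0 : 0 < β := by linarith
  have hpow : β ^ ((3 : ℝ) / 2) * varianceNumerator β =
      2 * √β * (β ^ 2 * ∫ x in Ioi 0, tailIntegral β x ^ 2 * exp (β * (energy x - 1))) := by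
    rw [varianceNumerator, show (3 : ℝ) / 2 = 1 / 2 + 1 by norm_num, rpow_add hβ0, rpow_one,
      ← sqrt_eq_rpow]
    ring
  obtain ⟨hlow, hup⟩ := sq_mul_integral_tailIntegral_sq_mul_exp_mem_Icc hβ
  have hs : 0 ≤ 2 * √β := by positivity
  rw [hpow]
  constructor
  · calc (1 - β⁻¹) ^ 2 * (2 * (√β * ∫ x in Ioi 0, weight β x))
        = 2 * √β * ((1 - β⁻¹) ^ 2 * ∫ x in Ioi 0, weight β x) := by ring
      _ ≤ _ := mul_le_mul_of_nonneg_left hlow hs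
  · calc _ ≤ 2 * √β * ∫ x in Ioi 0, weight β x := mul_le_mul_of_nonneg_left hup hs
      _ = _ := by ring

end DunkelHanggi

open DunkelHanggi in
/-- As β → ∞, K_β ∼ √(2π) β^{−3/2}, i.e. β^{3/2} K_β → √(2π). -/
theorem stmt15 :
    Tendsto (fun β : ℝ => β ^ ((3:ℝ)/2) *
        (2 * β * ∫ x in Ioi (0:ℝ),
          (∫ y in Ioi x, y * Real.exp (β * (1 - Real.sqrt (1 + y ^ 2))) / (1 + y ^ 2)) ^ 2
            * Real.exp (β * (Real.sqrt (1 + x ^ 2) - 1))))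
      atTop (nhds (Real.sqrt (2 * Real.pi))) := by
  have hweight := tendsto_two_mul_sqrt_mul_integral_weight
  have hfactor : Tendsto (fun β : ℝ => (1 - β⁻¹) ^ 2) atTop (𝓝 1) := by
    simpa using ((tendsto_inv_atTop_zero (𝕜 := ℝ)).const_sub 1).pow 2
  refine tendsto_of_tendsto_of_tendsto_of_le_of_le' (by simpa using hfactor.mul hweight) hweight
    ?_ ?_
  · filter_upwards [eventually_ge_atTop 2] with β hβ using (rpow_mul_varianceNumerator_mem_Icc hβ).1
  · filter_upwards [eventually_ge_atTop 2] with β hβ using (rpow_mul_varianceNumerator_mem_Icc hβ).2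
end

section
/- As β → 0⁺, K_β converges to 2 A₀, where A₀ := ∫₀^∞ ( ∫_x^∞ e^{−u} u^{−1} du )² eˣ dx (a finite positive constant). -/
/-!
The substitution `u = β (√(1 + y²) - 1)` turns the inner integral into
`I_β(x) = J_β(β (√(1 + x²) - 1))`, where `J_c(t) = ∫_t^∞ e^{-u} / (u + c) du` (so `J_0 = E₁`), and
the same substitution in the outer integral gives
`K_β = 2 ∫_0^∞ J_β(t)² e^t (t + β) / √(t² + 2βt) dt`.
As `β → 0⁺` this integrand tends to `E₁(t)² e^t`, and for `β ≤ 1` it is dominated by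
`E₁(t)² e^t (1 + t^{-1/2})`, which is integrable because `E₁(t) ≤ 8 t^{-1/8}` near `0` and
`E₁(t) ≤ e^{-t} / t` near `∞`; dominated convergence concludes.
-/

open Filter MeasureTheory Set Real Topology

theorem setIntegral_pos_of_forall_pos {α : Type*} [MeasurableSpace α] {μ : Measure α}
    {s : Set α} {f : α → ℝ} (hs : MeasurableSet s) (hμs : μ s ≠ 0)
    (hf : ∀ x ∈ s, 0 < f x) (hint : IntegrableOn f s μ) : 0 < ∫ x in s, f x ∂μ := by
  rw [setIntegral_pos_iff_support_of_nonneg_ae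
    (ae_restrict_of_forall_mem hs fun x hx => (hf x hx).le) hint,
    inter_eq_right.2 fun x hx => Function.mem_support.2 (hf x hx).ne']
  exact pos_iff_ne_zero.2 hμs

theorem measurable_setIntegral_Ioi {g : ℝ → ℝ} (hg : Measurable g) :
    Measurable fun t => ∫ u in Ioi t, g u := by
  have h : StronglyMeasurable (Function.uncurry fun t u => (Ioi t).indicator g u) :=
    (Measurable.ite (measurableSet_lt measurable_fst measurable_snd) (hg.comp measurable_snd)
      measurable_const).stronglyMeasurable
  simp_rw [← integral_indicator measurableSet_Ioi]
  exact h.integral_prod_right.measurable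

noncomputable def shiftedExpIntegral (c t : ℝ) : ℝ := ∫ u in Ioi t, exp (-u) * (u + c)⁻¹

theorem shiftedExpIntegral_zero (t : ℝ) :
    shiftedExpIntegral 0 t = ∫ u in Ioi t, exp (-u) * u⁻¹ := by
  simp [shiftedExpIntegral]

theorem measurable_shiftedExpIntegral (c : ℝ) : Measurable (shiftedExpIntegral c) :=
  measurable_setIntegral_Ioi (by fun_prop)

theorem exp_neg_mul_inv_add_le {c t u : ℝ} (h : 0 < t + c) (hu : t ≤ u) :
    exp (-u) * (u + c)⁻¹ ≤ exp (-u) * (t + c)⁻¹ := by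
  gcongr

theorem integrableOn_exp_neg_mul_inv_add {c t : ℝ} (h : 0 < t + c) :
    IntegrableOn (fun u => exp (-u) * (u + c)⁻¹) (Ioi t) := by
  refine ((integrableOn_exp_neg_Ioi t).mul_const (t + c)⁻¹).mono'
    (by fun_prop : Measurable fun u => exp (-u) * (u + c)⁻¹).aestronglyMeasurable ?_
  filter_upwards [ae_restrict_mem measurableSet_Ioi] with u (hu : t < u)
  have : 0 < u + c := by linarith
  rw [norm_of_nonneg (by positivity)]
  exact exp_neg_mul_inv_add_le h hu.le

theorem shiftedExpIntegral_pos {c t : ℝ} (h : 0 < t + c) : 0 < shiftedExpIntegral c t :=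
  setIntegral_pos_of_forall_pos measurableSet_Ioi (by simp)
    (fun u (hu : t < u) => by
      have : 0 < u + c := by linarith
      positivity)
    (integrableOn_exp_neg_mul_inv_add h)

theorem shiftedExpIntegral_anti_left {c c' t : ℝ} (h : 0 < t + c) (hc : c ≤ c') :
    shiftedExpIntegral c' t ≤ shiftedExpIntegral c t :=
  setIntegral_mono_on (integrableOn_exp_neg_mul_inv_add (by linarith))
    (integrableOn_exp_neg_mul_inv_add h) measurableSet_Ioi fun u (hu : t < u) => by
      have : 0 < u + c := by linarith
      gcongr

theorem shiftedExpIntegral_le {c t : ℝ} (h : 0 < t + c) :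
    shiftedExpIntegral c t ≤ exp (-t) / (t + c) := by
  calc shiftedExpIntegral c t ≤ ∫ u in Ioi t, exp (-u) * (t + c)⁻¹ :=
        setIntegral_mono_on (integrableOn_exp_neg_mul_inv_add h)
          ((integrableOn_exp_neg_Ioi t).mul_const _) measurableSet_Ioi
          fun u hu => exp_neg_mul_inv_add_le h (le_of_lt hu)
    _ = exp (-t) / (t + c) := by rw [integral_mul_const, integral_exp_neg_Ioi, div_eq_mul_inv]

theorem exp_neg_le_rpow_neg {a u : ℝ} (ha0 : 0 ≤ a) (ha1 : a ≤ 1) (hu : 0 < u) :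
    exp (-u) ≤ u ^ (-a) := by
  have h : u ^ a ≤ exp u := by
    rcases le_total u 1 with h | h
    · calc u ^ a ≤ 1 := rpow_le_one hu.le h ha0
        _ ≤ exp u := one_le_exp hu.le
    · calc u ^ a ≤ u := rpow_le_self_of_one_le h ha1
        _ ≤ exp u := (add_one_le_exp u).trans' (by linarith)
  rw [exp_neg, rpow_neg hu.le]
  exact inv_anti₀ (by positivity) h

theorem shiftedExpIntegral_zero_le_rpow {a t : ℝ} (ha0 : 0 < a) (ha1 : a ≤ 1) (ht : 0 < t) :
    shiftedExpIntegral 0 t ≤ t ^ (-a) / a := by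
  have hint : IntegrableOn (fun u : ℝ => u ^ (-a - 1)) (Ioi t) :=
    integrableOn_Ioi_rpow_of_lt (by linarith) ht
  calc shiftedExpIntegral 0 t ≤ ∫ u in Ioi t, u ^ (-a - 1) :=
        setIntegral_mono_on (integrableOn_exp_neg_mul_inv_add (by simpa using ht)) hint
          measurableSet_Ioi fun u (hu : t < u) => by
            have hu0 : 0 < u := ht.trans hu
            rw [add_zero, rpow_sub hu0, rpow_one, div_eq_mul_inv]
            gcongr
            exact exp_neg_le_rpow_neg ha0.le ha1 hu0
    _ = t ^ (-a) / a := by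
        rw [integral_Ioi_rpow_of_lt (by linarith) ht, sub_add_cancel, div_neg, neg_div, neg_neg]

theorem continuousWithinAt_shiftedExpIntegral_left {c t : ℝ} (h : 0 < t + c) :
    ContinuousWithinAt (fun c' => shiftedExpIntegral c' t) (Ici c) c := by
  refine continuousWithinAt_of_dominated (bound := fun u => exp (-u) * (u + c)⁻¹)
    (Eventually.of_forall fun c' => ?_) ?_ (integrableOn_exp_neg_mul_inv_add h) ?_
  · exact (by fun_prop : Measurable fun u => exp (-u) * (u + c')⁻¹).aestronglyMeasurable
  · filter_upwards [self_mem_nhdsWithin] with c' (hc' : c ≤ c')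
    filter_upwards [ae_restrict_mem measurableSet_Ioi] with u (hu : t < u)
    have : 0 < u + c := by linarith
    have : 0 < u + c' := by linarith
    rw [norm_of_nonneg (by positivity)]
    gcongr
  · filter_upwards [ae_restrict_mem measurableSet_Ioi] with u (hu : t < u)
    have : u + c ≠ 0 := by linarith
    exact ContinuousAt.continuousWithinAt (by fun_prop (disch := assumption))

noncomputable def kineticEnergy (β y : ℝ) : ℝ := β * (√(1 + y ^ 2) - 1)

theorem hasDerivAt_kineticEnergy (β y : ℝ) :
    HasDerivAt (kineticEnergy β) (β * y / √(1 + y ^ 2)) y := by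
  have h : HasDerivAt (fun y : ℝ => 1 + y ^ 2) (2 * y) y := by
    simpa using (hasDerivAt_pow 2 y).const_add 1
  refine (((h.sqrt (by positivity)).sub_const 1).const_mul β).congr_deriv ?_
  field_simp

theorem strictMonoOn_kineticEnergy {β : ℝ} (hβ : 0 < β) :
    StrictMonoOn (kineticEnergy β) (Ici 0) := by
  intro x (hx : 0 ≤ x) y (hy : 0 ≤ y) hxy
  unfold kineticEnergy
  gcongr

theorem kineticEnergy_zero (β : ℝ) : kineticEnergy β 0 = 0 := by
  simp [kineticEnergy]

theorem kineticEnergy_nonneg {β : ℝ} (hβ : 0 ≤ β) (y : ℝ) : 0 ≤ kineticEnergy β y := by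
  unfold kineticEnergy
  have : 1 ≤ √(1 + y ^ 2) := one_le_sqrt.2 (by nlinarith)
  nlinarith

theorem kineticEnergy_sqrt_div {β u : ℝ} (hβ : 0 < β) (hu : 0 ≤ u) :
    kineticEnergy β (√(u ^ 2 + 2 * β * u) / β) = u := by
  have h : 1 + (√(u ^ 2 + 2 * β * u) / β) ^ 2 = ((u + β) / β) ^ 2 := by
    rw [div_pow, sq_sqrt (by positivity)]
    field_simp
    ring
  rw [kineticEnergy, h, sqrt_sq (by positivity)]
  field_simp
  ring

theorem kineticEnergy_image_Ioi {β x : ℝ} (hβ : 0 < β) (hx : 0 ≤ x) :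
    kineticEnergy β '' Ioi x = Ioi (kineticEnergy β x) := by
  have hmono := strictMonoOn_kineticEnergy hβ
  refine ((hmono.mono (Ici_subset_Ici.2 hx)).image_Ioi_subset).antisymm fun u (hu : _ < u) => ?_
  have hu0 : 0 ≤ u := (kineticEnergy_nonneg hβ.le x).trans hu.le
  refine ⟨√(u ^ 2 + 2 * β * u) / β, ?_, kineticEnergy_sqrt_div hβ hu0⟩
  rw [← kineticEnergy_sqrt_div hβ hu0] at hu
  exact (hmono.lt_iff_lt hx (mem_Ici.2 (by positivity))).1 hu

theorem integral_Ioi_kineticEnergy {β x : ℝ} (hβ : 0 < β) (hx : 0 ≤ x) (g : ℝ → ℝ) :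
    ∫ u in Ioi (kineticEnergy β x), g u
      = ∫ y in Ioi x, β * y / √(1 + y ^ 2) * g (kineticEnergy β y) := by
  have hinj : InjOn (kineticEnergy β) (Ioi x) := (strictMonoOn_kineticEnergy hβ).injOn.mono
    (Ioi_subset_Ici_self.trans (Ici_subset_Ici.2 hx))
  rw [← kineticEnergy_image_Ioi hβ hx, integral_image_eq_integral_abs_deriv_smul measurableSet_Ioi
    (fun y _ => (hasDerivAt_kineticEnergy β y).hasDerivWithinAt) hinj]
  refine setIntegral_congr_fun measurableSet_Ioi fun y (hy : x < y) => ?_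
  have : 0 ≤ y := hx.trans hy.le
  rw [abs_of_nonneg (by positivity), smul_eq_mul]

theorem integral_Ioi_eq_shiftedExpIntegral_kineticEnergy {β x : ℝ} (hβ : 0 < β)
    (hx : 0 ≤ x) :
    ∫ y in Ioi x, y * exp (β * (1 - √(1 + y ^ 2))) / (1 + y ^ 2)
      = shiftedExpIntegral β (kineticEnergy β x) := by
  rw [shiftedExpIntegral, integral_Ioi_kineticEnergy hβ hx]
  refine setIntegral_congr_fun measurableSet_Ioi fun y _ => ?_
  have hS : 0 < √(1 + y ^ 2) := sqrt_pos.2 (by positivity)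
  have hS2 : √(1 + y ^ 2) ^ 2 = 1 + y ^ 2 := sq_sqrt (by positivity)
  rw [kineticEnergy]
  set S := √(1 + y ^ 2)
  rw [← hS2, show -(β * (S - 1)) = β * (1 - S) by ring,
    show β * (S - 1) + β = β * S by ring]
  field_simp

noncomputable def energyIntegrand (β t : ℝ) : ℝ :=
  shiftedExpIntegral β t ^ 2 * exp t * ((t + β) / √(t ^ 2 + 2 * β * t))

theorem integral_energyIntegrand {β : ℝ} (hβ : 0 < β) :
    ∫ t in Ioi 0, energyIntegrand β t
      = β * ∫ x in Ioi 0,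
          shiftedExpIntegral β (kineticEnergy β x) ^ 2 * exp (kineticEnergy β x) := by
  conv_lhs => rw [← kineticEnergy_zero β, integral_Ioi_kineticEnergy hβ le_rfl]
  rw [← integral_const_mul]
  refine setIntegral_congr_fun measurableSet_Ioi fun x (hx : 0 < x) => ?_
  have hS : 0 < √(1 + x ^ 2) := sqrt_pos.2 (by positivity)
  have hS2 : √(1 + x ^ 2) ^ 2 = 1 + x ^ 2 := sq_sqrt (by positivity)
  have hsum : kineticEnergy β x + β = β * √(1 + x ^ 2) := by rw [kineticEnergy]; ring
  have hroot : √(kineticEnergy β x ^ 2 + 2 * β * kineticEnergy β x) = β * x := by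
    rw [← sqrt_sq (by positivity : 0 ≤ β * x)]
    congr 1
    rw [kineticEnergy]
    linear_combination β ^ 2 * hS2
  rw [energyIntegrand, hsum, hroot]
  field_simp

theorem div_sqrt_le_one_add_rpow {β t : ℝ} (hβ0 : 0 ≤ β) (hβ1 : β ≤ 1) (ht : 0 < t) :
    (t + β) / √(t ^ 2 + 2 * β * t) ≤ 1 + t ^ (-(1 / 2 : ℝ)) := by
  set q := √(t ^ 2 + 2 * β * t)
  set s := t ^ (-(1 / 2 : ℝ))
  have hq : t ≤ q := (le_sqrt ht.le (by positivity)).2 (by nlinarith)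
  have hs2 : s ^ 2 = t⁻¹ := by
    rw [← rpow_mul_natCast ht.le]
    norm_num [rpow_neg_one]
  have hsq : β ≤ s * q := by
    refine le_of_pow_le_pow_left₀ two_ne_zero (by positivity) ?_
    rw [mul_pow, hs2, sq_sqrt (by positivity)]
    field_simp
    nlinarith
  rw [div_le_iff₀ (ht.trans_le hq)]
  linarith

noncomputable def energyMajorant (t : ℝ) : ℝ :=
  shiftedExpIntegral 0 t ^ 2 * exp t * (1 + t ^ (-(1 / 2 : ℝ)))

theorem energyMajorant_le_of_le_one {t : ℝ} (ht0 : 0 < t) (ht1 : t ≤ 1) :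
    energyMajorant t ≤ 128 * exp 1 * t ^ (-(3 / 4 : ℝ)) := by
  have hpow (n : ℕ) : t ^ (-(1 / 8 : ℝ) * n) = (t ^ (-(1 / 8 : ℝ))) ^ n :=
    rpow_mul_natCast ht0.le _ n
  have hE : shiftedExpIntegral 0 t ≤ 8 * t ^ (-(1 / 8 : ℝ)) :=
    (shiftedExpIntegral_zero_le_rpow (a := 1 / 8) (by norm_num) (by norm_num) ht0).trans_eq
      (by ring)
  have hs1 : 1 ≤ t ^ (-(1 / 8 : ℝ)) :=
    one_le_rpow_of_pos_of_le_one_of_nonpos ht0 ht1 (by norm_num)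
  have hE0 := (shiftedExpIntegral_pos (c := 0) (t := t) (by simpa using ht0)).le
  rw [energyMajorant, show -(1 / 2 : ℝ) = -(1 / 8) * (4 : ℕ) by norm_num,
    show -(3 / 4 : ℝ) = -(1 / 8) * (6 : ℕ) by norm_num, hpow, hpow]
  generalize t ^ (-(1 / 8 : ℝ)) = s at *
  calc shiftedExpIntegral 0 t ^ 2 * exp t * (1 + s ^ 4)
      ≤ (8 * s) ^ 2 * exp 1 * (2 * s ^ 4) := by
        gcongr
        nlinarith [one_le_pow₀ (n := 4) hs1]
    _ = 128 * exp 1 * s ^ 6 := by ring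

theorem energyMajorant_le_of_one_lt {t : ℝ} (ht : 1 < t) :
    energyMajorant t ≤ 2 * exp (-t) := by
  have hE : shiftedExpIntegral 0 t ≤ exp (-t) := by
    refine (shiftedExpIntegral_le (by linarith)).trans ?_
    rw [add_zero, div_le_iff₀ (by linarith)]
    nlinarith [exp_pos (-t)]
  have hE0 := (shiftedExpIntegral_pos (c := 0) (t := t) (by linarith)).le
  have hs : t ^ (-(1 / 2 : ℝ)) ≤ 1 := rpow_le_one_of_one_le_of_nonpos ht.le (by norm_num)
  calc energyMajorant t ≤ exp (-t) ^ 2 * exp t * 2 := by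
        unfold energyMajorant; gcongr; linarith
    _ = 2 * exp (-t) := by
        rw [exp_neg]
        field_simp

theorem measurable_energyMajorant : Measurable energyMajorant := by
  have := measurable_shiftedExpIntegral 0
  unfold energyMajorant
  fun_prop

theorem integrableOn_energyMajorant : IntegrableOn energyMajorant (Ioi 0) := by
  rw [← Ioc_union_Ioi_eq_Ioi zero_le_one, integrableOn_union]
  constructor
  · have hpow : IntegrableOn (fun t : ℝ => t ^ (-(3 / 4 : ℝ))) (Ioc 0 1) :=
      (intervalIntegral.intervalIntegrable_rpow' (a := 0) (b := 1) (by norm_num)).1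
    refine (hpow.const_mul (128 * exp 1)).mono'
      measurable_energyMajorant.aestronglyMeasurable ?_
    filter_upwards [ae_restrict_mem measurableSet_Ioc] with t ⟨ht0, ht1⟩
    have := (shiftedExpIntegral_pos (c := 0) (t := t) (by simpa using ht0)).le
    rw [norm_of_nonneg (by unfold energyMajorant; positivity)]
    exact energyMajorant_le_of_le_one ht0 ht1
  · refine ((integrableOn_exp_neg_Ioi 1).const_mul 2).mono'
      measurable_energyMajorant.aestronglyMeasurable ?_
    filter_upwards [ae_restrict_mem measurableSet_Ioi] with t (ht : 1 < t)
    have := (shiftedExpIntegral_pos (c := 0) (t := t) (by linarith)).le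
    rw [norm_of_nonneg (by unfold energyMajorant; positivity)]
    exact energyMajorant_le_of_one_lt ht

theorem measurable_energyIntegrand (β : ℝ) : Measurable (energyIntegrand β) := by
  have := measurable_shiftedExpIntegral β
  unfold energyIntegrand
  fun_prop

theorem energyIntegrand_nonneg {β t : ℝ} (hβ : 0 ≤ β) (ht : 0 < t) :
    0 ≤ energyIntegrand β t := by
  have := (shiftedExpIntegral_pos (c := β) (t := t) (by linarith)).le
  unfold energyIntegrand
  positivity

theorem energyIntegrand_le_energyMajorant {β t : ℝ} (hβ0 : 0 ≤ β) (hβ1 : β ≤ 1) (ht : 0 < t) :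
    energyIntegrand β t ≤ energyMajorant t := by
  have := (shiftedExpIntegral_pos (c := β) (t := t) (by linarith)).le
  unfold energyIntegrand energyMajorant
  gcongr
  · exact shiftedExpIntegral_anti_left (by simpa using ht) hβ0
  · exact div_sqrt_le_one_add_rpow hβ0 hβ1 ht

theorem tendsto_energyIntegrand {t : ℝ} (ht : 0 < t) :
    Tendsto (fun β => energyIntegrand β t) (𝓝[>] 0)
      (𝓝 (shiftedExpIntegral 0 t ^ 2 * exp t)) := by
  have hJ : Tendsto (fun β => shiftedExpIntegral β t) (𝓝[>] 0) (𝓝 (shiftedExpIntegral 0 t)) :=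
    ((continuousWithinAt_shiftedExpIntegral_left (by simpa using ht)).mono
      Ioi_subset_Ici_self).tendsto
  have hR : Tendsto (fun β => (t + β) / √(t ^ 2 + 2 * β * t)) (𝓝[>] 0) (𝓝 1) := by
    have hc : ContinuousAt (fun β => (t + β) / √(t ^ 2 + 2 * β * t)) 0 :=
      (continuousAt_const.add continuousAt_id).div (by fun_prop)
        (by simp [sqrt_sq ht.le, ht.ne'])
    simpa [sqrt_sq ht.le, ht.ne'] using hc.tendsto.mono_left nhdsWithin_le_nhds
  simpa [energyIntegrand] using ((hJ.pow 2).mul_const (exp t)).mul hR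

theorem tendsto_integral_energyIntegrand :
    Tendsto (fun β => ∫ t in Ioi 0, energyIntegrand β t) (𝓝[>] 0)
      (𝓝 (∫ t in Ioi 0, shiftedExpIntegral 0 t ^ 2 * exp t)) := by
  refine tendsto_integral_filter_of_dominated_convergence _
    (Eventually.of_forall fun β => (measurable_energyIntegrand β).aestronglyMeasurable) ?_
    integrableOn_energyMajorant ?_
  · filter_upwards [Ioc_mem_nhdsGT zero_lt_one] with β ⟨hβ0, hβ1⟩
    filter_upwards [ae_restrict_mem measurableSet_Ioi] with t (ht : 0 < t)
    rw [norm_of_nonneg (energyIntegrand_nonneg hβ0.le ht)]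
    exact energyIntegrand_le_energyMajorant hβ0.le hβ1 ht
  · filter_upwards [ae_restrict_mem measurableSet_Ioi] with t (ht : 0 < t)
    exact tendsto_energyIntegrand ht

theorem integrableOn_shiftedExpIntegral_zero_sq_mul_exp :
    IntegrableOn (fun t => shiftedExpIntegral 0 t ^ 2 * exp t) (Ioi 0) := by
  have hmeas : Measurable fun t => shiftedExpIntegral 0 t ^ 2 * exp t := by
    have := measurable_shiftedExpIntegral 0
    fun_prop
  refine integrableOn_energyMajorant.mono' hmeas.aestronglyMeasurable ?_
  filter_upwards [ae_restrict_mem measurableSet_Ioi] with t (ht : 0 < t)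
  rw [norm_of_nonneg (by positivity), energyMajorant]
  exact le_mul_of_one_le_right (by positivity) (by simp [rpow_nonneg ht.le])

theorem integral_shiftedExpIntegral_zero_sq_mul_exp_pos :
    0 < ∫ t in Ioi 0, shiftedExpIntegral 0 t ^ 2 * exp t :=
  setIntegral_pos_of_forall_pos measurableSet_Ioi (by simp)
    (fun t (ht : 0 < t) => by
      have := shiftedExpIntegral_pos (c := 0) (t := t) (by simpa using ht)
      positivity)
    integrableOn_shiftedExpIntegral_zero_sq_mul_exp

/-- As β → 0⁺, K_β → 2 A₀, where A₀ = ∫₀^∞ (∫_x^∞ e^{−u} u⁻¹ du)² eˣ dx is a finite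
positive constant. -/
theorem stmt16 :
    0 < ∫ x in Ioi (0:ℝ), (∫ u in Ioi x, Real.exp (-u) * u⁻¹) ^ 2 * Real.exp x ∧
    IntegrableOn (fun x => (∫ u in Ioi x, Real.exp (-u) * u⁻¹) ^ 2 * Real.exp x) (Ioi 0) ∧
    Tendsto (fun β : ℝ =>
        2 * β * ∫ x in Ioi (0:ℝ),
          (∫ y in Ioi x, y * Real.exp (β * (1 - Real.sqrt (1 + y ^ 2))) / (1 + y ^ 2)) ^ 2
            * Real.exp (β * (Real.sqrt (1 + x ^ 2) - 1)))
      (nhdsWithin 0 (Ioi 0))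
      (nhds (2 * ∫ x in Ioi (0:ℝ), (∫ u in Ioi x, Real.exp (-u) * u⁻¹) ^ 2 * Real.exp x)) := by
  simp_rw [← shiftedExpIntegral_zero]
  refine ⟨integral_shiftedExpIntegral_zero_sq_mul_exp_pos,
    integrableOn_shiftedExpIntegral_zero_sq_mul_exp,
    (tendsto_integral_energyIntegrand.const_mul 2).congr' ?_⟩
  filter_upwards [self_mem_nhdsWithin] with β (hβ : 0 < β)
  rw [integral_energyIntegrand hβ, ← mul_assoc]
  congr 1
  refine setIntegral_congr_fun measurableSet_Ioi fun x (hx : 0 < x) => ?_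
  rw [integral_Ioi_eq_shiftedExpIntegral_kineticEnergy hβ hx.le]
  rfl
end
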